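/- arXiv:math/0212030 — 10 statements merged into one kernel-verified Lean document; each statement's English description precedes it below -/
import Mathlib

section
/- Let V = V₀ ⊕ V₁ ⊕ V₂ with each component one-dimensional, spanned by v, w, x respectively, with skew-symmetric operators lₙ of degree 2−n determined by constants aₙ, bₙ, cₙ via lₙ(v⊗w^{⊗(n−1)}) = aₙw, lₙ(w^{⊗n}) = bₙx, lₙ(v⊗w^{⊗(n−2)}⊗x) = cₙx (with c₁ = 0), all other values on basis tensors being zero. Then the n-th generalized Jacobi expression Jₙ vanishes identically if and only if Jₙ(v ⊗ w^{⊗(n−1)}) = 0. -/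
open Finset Equiv

/-- Sign `(-1)^z` for an integer `z`, valued in a field. -/
def ksign (K : Type*) [Field K] (z : ℤ) : K := if Even z then 1 else -1

/-- The Koszul sign `χ(σ)` of a permutation acting on a list of basis elements
with degrees given by `d`. -/
def chi (K : Type*) [Field K] (d : Fin 3 → ℤ) (xs : List (Fin 3))
    (σ : Perm (Fin xs.length)) : K :=
  ((Perm.sign σ : ℤ) : K) *
    ∏ p ∈ Finset.univ.filter
      (fun p : Fin xs.length × Fin xs.length => p.1 < p.2 ∧ σ p.2 < σ p.1),
      ksign K (d (xs.get (σ p.1)) * d (xs.get (σ p.2)))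

/-- `(p, n-p)`-unshuffles in `S_n`. -/
def unshuffles (p n : ℕ) : Finset (Perm (Fin n)) :=
  Finset.univ.filter (fun σ =>
    (∀ i j : Fin n, i < j → (j : ℕ) < p → σ i < σ j) ∧
    (∀ i j : Fin n, p ≤ (i : ℕ) → i < j → σ i < σ j))

/-- The Koszul sign picked up when sorting a list of basis elements into
canonical (increasing) order; degrees given by `d`. -/
def sortSign (K : Type*) [Field K] (d : Fin 3 → ℤ) (xs : List (Fin 3)) : K :=
  ∏ p ∈ Finset.univ.filter
    (fun p : Fin xs.length × Fin xs.length => p.1 < p.2 ∧ xs.get p.2 < xs.get p.1),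
    (-(ksign K (d (xs.get p.1) * d (xs.get p.2))))

/-- The generalized Jacobi expression `Jₙ = Σ_p (-1)^{p(n-p)} l_{n-p+1} ∘ l_p`,
evaluated on a basis tensor `xs` (so `n = xs.length`), where `ell` gives the
value of each `l_m` on basis tensors (as a coordinate vector in `Fin 3 → K`),
extended by unshuffles with Koszul signs. -/
def Jac (K : Type*) [Field K] (d : Fin 3 → ℤ) (ell : List (Fin 3) → (Fin 3 → K))
    (xs : List (Fin 3)) : Fin 3 → K :=
  ∑ p ∈ Finset.Icc 1 xs.length, ((-1 : K) ^ (p * (xs.length - p))) •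
    ∑ σ ∈ unshuffles p xs.length,
      chi K d xs σ •
        (fun j : Fin 3 => ∑ i : Fin 3,
          ell ((List.ofFn (fun t => xs.get (σ t))).take p) i *
          ell (i :: (List.ofFn (fun t => xs.get (σ t))).drop p) j)

/-- The operators on `V₀ ⊕ V₁ ⊕ V₂` (basis `v = 0, w = 1, x = 2`) determined by
constants `a, b, c`:  `lₙ(v⊗w^{n-1}) = aₙ w`, `lₙ(w^n) = bₙ x`,
`lₙ(v⊗w^{n-2}⊗x) = cₙ x`, all other values zero, extended skew-symmetrically. -/
def ell012 {K : Type*} [Field K] (a b c : ℕ → K) (xs : List (Fin 3)) : Fin 3 → K :=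
  sortSign K ![0, 1, 2] xs •
    (if xs.count 0 = 1 ∧ xs.count 2 = 0 then
        (fun j : Fin 3 => if j = 1 then a xs.length else 0)
      else if xs.count 0 = 0 ∧ xs.count 2 = 0 then
        (fun j : Fin 3 => if j = 2 then b xs.length else 0)
      else if xs.count 0 = 1 ∧ xs.count 2 = 1 then
        (fun j : Fin 3 => if j = 2 then c xs.length else 0)
      else 0)


/-!
The operator `Jₙ` inherits graded skew-symmetry from the `lₙ`: under a transposition of adjacent
arguments, the unshuffles that separate the two arguments are permuted among themselves, while for
those that keep them in one block the transposition passes inside `l_p` or `l_{n-p+1}`. Hence `Jₙ`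
vanishes on basis tensors with two factors `v` (of even degree), and its vanishing is invariant
under rearranging the factors. Counting degrees, `Jₙ` is zero on a basis tensor unless `v` occurs
twice, or once without `x`; the latter tensors are the rearrangements of `v ⊗ w^{⊗(n-1)}`.
-/

namespace Jacobi

variable {K : Type*} [Field K]

theorem ksign_mul_self (z : ℤ) : ksign K z * ksign K z = 1 := by
  unfold ksign
  split_ifs <;> norm_num

theorem ksign_ne_zero (z : ℤ) : ksign K z ≠ 0 :=
  left_ne_zero_of_mul_eq_one (ksign_mul_self z)

theorem neg_ksign_mul_neg_ksign (z : ℤ) : -ksign K z * -ksign K z = 1 := by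
  rw [neg_mul_neg, ksign_mul_self]

/-- `chi` for a basis tensor given as a function `Fin n → Fin 3` instead of a list, so that its
factors can be permuted without casts between list lengths; likewise `sortSignFn` and `jacFn`. -/
def chiFn (K : Type*) [Field K] (d : Fin 3 → ℤ) {n : ℕ} (g : Fin n → Fin 3)
    (σ : Perm (Fin n)) : K :=
  ((Perm.sign σ : ℤ) : K) *
    ∏ p ∈ univ.filter (fun p : Fin n × Fin n => p.1 < p.2 ∧ σ p.2 < σ p.1),
      ksign K (d (g (σ p.1)) * d (g (σ p.2)))

def sortSignFn (K : Type*) [Field K] (d : Fin 3 → ℤ) {n : ℕ} (g : Fin n → Fin 3) : K :=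
  ∏ p ∈ univ.filter (fun p : Fin n × Fin n => p.1 < p.2 ∧ g p.2 < g p.1),
    -ksign K (d (g p.1) * d (g p.2))

/-- The coordinates of `l_{n-p+1}(l_p(f₁ ⊗ ⋯ ⊗ f_p) ⊗ f_{p+1} ⊗ ⋯ ⊗ fₙ)`. -/
def compTerm (ell : List (Fin 3) → Fin 3 → K) {n : ℕ} (p : ℕ) (f : Fin n → Fin 3) :
    Fin 3 → K :=
  fun j => ∑ i : Fin 3, ell ((List.ofFn f).take p) i * ell (i :: (List.ofFn f).drop p) j

def jacFn (K : Type*) [Field K] (d : Fin 3 → ℤ) (ell : List (Fin 3) → Fin 3 → K) {n : ℕ}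
    (g : Fin n → Fin 3) : Fin 3 → K :=
  ∑ p ∈ Icc 1 n, ((-1 : K) ^ (p * (n - p))) •
    ∑ σ ∈ unshuffles p n, chiFn K d g σ • compTerm ell p (g ∘ σ)

theorem jac_ofFn (d : Fin 3 → ℤ) (ell : List (Fin 3) → Fin 3 → K) {n : ℕ} (g : Fin n → Fin 3) :
    Jac K d ell (List.ofFn g) = jacFn K d ell g := by
  have key : ∀ {m : ℕ} (h : m = n) (g' : Fin m → Fin 3), g' = g ∘ Fin.cast h →
      jacFn K d ell g' = jacFn K d ell g := by
    rintro m rfl g' rfl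
    rfl
  exact key List.length_ofFn _ (funext fun s => List.get_ofFn ..)

section Inversions

theorem prod_eq_mul_prod_of_mem_iff {α M : Type*} [CommMonoid M] [DecidableEq α]
    {S T : Finset α} {e : α} {f : α → M} (hf : f e * f e = 1) (he : e ∈ T ↔ e ∉ S)
    (hrest : ∀ x, x ≠ e → (x ∈ T ↔ x ∈ S)) :
    ∏ x ∈ T, f x = f e * ∏ x ∈ S, f x := by
  by_cases hS : e ∈ S
  · have hT : T = S.erase e := by
      ext x
      by_cases hx : x = e
      · subst hx; simp [he, hS]
      · simp [hrest x hx, hx]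
    rw [hT, ← mul_prod_erase S f hS, ← mul_assoc, hf, one_mul]
  · have hT : T = insert e S := by
      ext x
      by_cases hx : x = e
      · subst hx; simp [he, hS]
      · simp [hrest x hx, hx]
    rw [hT, prod_insert hS]

theorem prod_eq_ite_mul_prod_erase {α M : Type*} [CommMonoid M] [DecidableEq α]
    (T : Finset α) (e : α) (f : α → M) :
    ∏ x ∈ T, f x = (if e ∈ T then f e else 1) * ∏ x ∈ T.erase e, f x := by
  split_ifs with h
  · rw [mul_prod_erase T f h]
  · rw [one_mul, erase_eq_of_notMem h]

variable {M : Type*} [CommMonoid M] {n : ℕ}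

theorem swap_lt_swap_iff {i j : Fin n} (hij : (i : ℕ) + 1 = j) {x y : Fin n}
    (h₁ : ¬(x = i ∧ y = j)) (h₂ : ¬(x = j ∧ y = i)) :
    swap i j x < swap i j y ↔ x < y := by
  rw [swap_apply_def, swap_apply_def]
  simp only [Fin.lt_def]
  split_ifs <;> simp only [Fin.ext_iff, not_and] at * <;> omega

theorem prod_filter_swap_erase {i j : Fin n} (hij : (i : ℕ) + 1 = j)
    (r : Fin n → Fin n → Prop) [DecidableRel r] (F : Fin n → Fin n → M) :
    ∏ p ∈ (univ.filter fun p : Fin n × Fin n => p.1 < p.2 ∧ r (swap i j p.1) (swap i j p.2)).erase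
        (i, j), F (swap i j p.1) (swap i j p.2) =
      ∏ p ∈ (univ.filter fun p : Fin n × Fin n => p.1 < p.2 ∧ r p.1 p.2).erase (i, j),
        F p.1 p.2 := by
  have hlt : i < j := by simp only [Fin.lt_def]; omega
  have maps : ∀ (r' : Fin n → Fin n → Prop) [DecidableRel r'] (p : Fin n × Fin n),
      p ∈ (univ.filter fun p : Fin n × Fin n => p.1 < p.2 ∧ r' p.1 p.2).erase (i, j) →
      (swap i j p.1, swap i j p.2) ∈
        (univ.filter fun p : Fin n × Fin n => p.1 < p.2 ∧ r' (swap i j p.1) (swap i j p.2)).erase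
          (i, j) := by
    rintro r' _ ⟨x, y⟩ hp
    simp only [mem_erase, mem_filter, mem_univ, true_and, ne_eq, Prod.mk.injEq] at hp ⊢
    obtain ⟨hne, hxy, hr⟩ := hp
    have hji : ¬(x = j ∧ y = i) := fun ⟨hx, hy⟩ => (hx ▸ hy ▸ hxy).not_gt hlt
    refine ⟨fun ⟨hx, hy⟩ => hji ⟨?_, ?_⟩, (swap_lt_swap_iff hij hne hji).mpr hxy, by simpa⟩
    · simpa using congrArg (swap i j) hx
    · simpa using congrArg (swap i j) hy
  have maps' := maps fun x y => r (swap i j x) (swap i j y)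
  simp only [swap_apply_self] at maps'
  exact prod_nbij' (fun p => (swap i j p.1, swap i j p.2)) (fun p => (swap i j p.1, swap i j p.2))
    maps' (maps r) (by simp) (by simp) (by simp)

theorem prod_inversions_comp_swap {α : Type*} [LinearOrder α] {i j : Fin n}
    (hij : (i : ℕ) + 1 = j) (φ : Fin n → α) (F : Fin n → Fin n → M)
    (hF : F i j * F i j = 1) (hFsymm : F j i = F i j) :
    ∏ p ∈ univ.filter (fun p : Fin n × Fin n => p.1 < p.2 ∧ φ (swap i j p.2) < φ (swap i j p.1)),
        F (swap i j p.1) (swap i j p.2) =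
      (if φ i = φ j then 1 else F i j) *
        ∏ p ∈ univ.filter (fun p : Fin n × Fin n => p.1 < p.2 ∧ φ p.2 < φ p.1), F p.1 p.2 := by
  have hlt : i < j := by simp only [Fin.lt_def]; omega
  rw [prod_eq_ite_mul_prod_erase _ (i, j), prod_eq_ite_mul_prod_erase (univ.filter _) (i, j),
    prod_filter_swap_erase hij (fun x y => φ y < φ x) (fun x y => F x y)]
  simp only [mem_filter, mem_univ, true_and, swap_apply_left, swap_apply_right, hlt, hFsymm]
  rcases lt_trichotomy (φ i) (φ j) with h | h | h
  · simp [h, h.ne, h.not_gt]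
  · simp [h]
  · simp only [h, h.ne', h.not_gt, if_true, if_false, one_mul]
    rw [← mul_assoc, hF, one_mul]

theorem prod_inversions_swap_mul {a b : Fin n} (hab : (a : ℕ) + 1 = b) (σ : Perm (Fin n))
    (F : Fin n → Fin n → M) (hF : F a b * F a b = 1) (hFsymm : F b a = F a b) :
    ∏ p ∈ univ.filter (fun p : Fin n × Fin n => p.1 < p.2 ∧ swap a b (σ p.2) < swap a b (σ p.1)),
        F (σ p.1) (σ p.2) =
      F a b * ∏ p ∈ univ.filter (fun p : Fin n × Fin n => p.1 < p.2 ∧ σ p.2 < σ p.1),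
        F (σ p.1) (σ p.2) := by
  have hlt : a < b := by simp only [Fin.lt_def]; omega
  obtain ⟨e, he, hσe⟩ : ∃ e : Fin n × Fin n,
      e.1 < e.2 ∧ (σ e.1 = a ∧ σ e.2 = b ∨ σ e.1 = b ∧ σ e.2 = a) := by
    rcases lt_or_gt_of_ne (σ.symm.injective.ne hlt.ne) with h | h
    · exact ⟨(σ.symm a, σ.symm b), h, Or.inl (by simp)⟩
    · exact ⟨(σ.symm b, σ.symm a), h, Or.inr (by simp)⟩
  have huniq : ∀ x y, x < y → (σ x = a ∧ σ y = b ∨ σ x = b ∧ σ y = a) → (x, y) = e := by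
    rintro x y hxy (⟨hx, hy⟩ | ⟨hx, hy⟩) <;> rcases hσe with ⟨h₁, h₂⟩ | ⟨h₁, h₂⟩
    · exact Prod.ext (σ.injective (hx.trans h₁.symm)) (σ.injective (hy.trans h₂.symm))
    · rw [σ.injective (hx.trans h₂.symm), σ.injective (hy.trans h₁.symm)] at hxy
      exact absurd he hxy.not_gt
    · rw [σ.injective (hx.trans h₂.symm), σ.injective (hy.trans h₁.symm)] at hxy
      exact absurd he hxy.not_gt
    · exact Prod.ext (σ.injective (hx.trans h₁.symm)) (σ.injective (hy.trans h₂.symm))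
  have hFe : F (σ e.1) (σ e.2) = F a b := by
    rcases hσe with ⟨h₁, h₂⟩ | ⟨h₁, h₂⟩ <;> rw [h₁, h₂]
    exact hFsymm
  rw [← hFe]
  refine prod_eq_mul_prod_of_mem_iff (f := fun p : Fin n × Fin n => F (σ p.1) (σ p.2))
    (hFe ▸ hF) ?_ ?_
  · rcases hσe with ⟨h₁, h₂⟩ | ⟨h₁, h₂⟩ <;> simp [he, h₁, h₂, hlt, hlt.not_gt]
  · rintro ⟨x, y⟩ hxe
    simp only [mem_filter, mem_univ, true_and]
    refine and_congr_right fun hxy => swap_lt_swap_iff hab ?_ ?_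
    · rintro ⟨hy, hx⟩
      exact hxe (huniq x y hxy (Or.inr ⟨hx, hy⟩))
    · rintro ⟨hy, hx⟩
      exact hxe (huniq x y hxy (Or.inl ⟨hx, hy⟩))

end Inversions

theorem count_ofFn {α : Type*} [DecidableEq α] {n : ℕ} (f : Fin n → α) (z : α) :
    (List.ofFn f).count z = #{s | f s = z} := by
  rw [← Multiset.coe_count, ← Fin.univ_val_map, Multiset.count_map]
  simp [eq_comm, Finset.card, Finset.filter_val]

theorem two_le_count_ofFn {α : Type*} [DecidableEq α] {n : ℕ} {f : Fin n → α} {i j : Fin n}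
    (hne : i ≠ j) (hij : f i = f j) : 2 ≤ (List.ofFn f).count (f i) := by
  rw [count_ofFn]
  exact one_lt_card_iff.mpr ⟨i, j, by simp, by simp [hij], hne⟩

theorem exists_ne_of_one_lt_count {α : Type*} [DecidableEq α] {n : ℕ} {f : Fin n → α} {z : α}
    (h : 1 < (List.ofFn f).count z) : ∃ q₁ q₂, q₁ ≠ q₂ ∧ f q₁ = z ∧ f q₂ = z := by
  rw [count_ofFn] at h
  obtain ⟨q₁, q₂, h₁, h₂, hne⟩ := one_lt_card_iff.mp h
  exact ⟨q₁, q₂, hne, (mem_filter.mp h₁).2, (mem_filter.mp h₂).2⟩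

section Koszul

variable (d : Fin 3 → ℤ) {n : ℕ} (g : Fin n → Fin 3)

theorem chiFn_mul_swap {i j : Fin n} (hij : (i : ℕ) + 1 = j) (σ : Perm (Fin n)) :
    chiFn K d g (σ * swap i j) = -ksign K (d (g (σ i)) * d (g (σ j))) * chiFn K d g σ := by
  have hne : i ≠ j := Fin.ne_of_lt (by simp only [Fin.lt_def]; omega)
  unfold chiFn
  rw [Perm.sign_mul, Perm.sign_swap hne]
  erw [prod_inversions_comp_swap hij σ (fun x y => ksign K (d (g (σ x)) * d (g (σ y))))
    (ksign_mul_self _) (by rw [mul_comm]), if_neg (σ.injective.ne hne)]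
  push_cast
  ring

theorem chiFn_swap_mul {a b : Fin n} (hab : (a : ℕ) + 1 = b) (σ : Perm (Fin n)) :
    chiFn K d g (swap a b * σ) = -ksign K (d (g a) * d (g b)) * chiFn K d (g ∘ swap a b) σ := by
  have hne : a ≠ b := Fin.ne_of_lt (by simp only [Fin.lt_def]; omega)
  unfold chiFn
  rw [Perm.sign_mul, Perm.sign_swap hne]
  erw [prod_inversions_swap_mul hab σ (fun x y => ksign K (d (g (swap a b x)) * d (g (swap a b y))))
    (ksign_mul_self _) (by rw [mul_comm])]
  simp only [Function.comp_apply, swap_apply_left, swap_apply_right, mul_comm (d (g b))]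
  push_cast
  ring

theorem sortSignFn_comp_swap {i j : Fin n} (hij : (i : ℕ) + 1 = j) :
    sortSignFn K d (g ∘ swap i j) =
      (if g i = g j then 1 else -ksign K (d (g i) * d (g j))) * sortSignFn K d g :=
  prod_inversions_comp_swap hij g (fun x y => -ksign K (d (g x) * d (g y)))
    (neg_ksign_mul_neg_ksign _) (by rw [mul_comm])

theorem sortSign_ofFn : sortSign K d (List.ofFn g) = sortSignFn K d g := by
  have hlen : (List.ofFn g).length = n := List.length_ofFn
  refine prod_bij' (fun p _ => (p.1.cast hlen, p.2.cast hlen))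
    (fun p _ => (p.1.cast hlen.symm, p.2.cast hlen.symm)) ?_ ?_ ?_ ?_ ?_ <;>
    simp [← Fin.val_fin_lt, Fin.cast]

theorem sortSign_mul_self (l : List (Fin 3)) : sortSign K d l * sortSign K d l = 1 := by
  rw [sortSign, ← prod_mul_distrib]
  exact prod_eq_one fun p _ => neg_ksign_mul_neg_ksign _

end Koszul

def IsGradedSkew (d : Fin 3 → ℤ) (ell : List (Fin 3) → Fin 3 → K) : Prop :=
  ∀ ⦃m : ℕ⦄ (h : Fin m → Fin 3) ⦃i j : Fin m⦄, (i : ℕ) + 1 = j →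
    ell (List.ofFn (h ∘ swap i j)) = -ksign K (d (h i) * d (h j)) • ell (List.ofFn h)

section Unshuffles

variable {p n : ℕ} {σ : Perm (Fin n)}

theorem mem_unshuffles_iff :
    σ ∈ unshuffles p n ↔
      ∀ x y : Fin n, x < y → ((x : ℕ) < p ↔ (y : ℕ) < p) → σ x < σ y := by
  simp only [unshuffles, mem_filter, mem_univ, true_and]
  constructor
  · rintro ⟨hleft, hright⟩ x y hxy hblock
    by_cases hy : (y : ℕ) < p
    · exact hleft x y hxy hy
    · exact hright x y (by rw [Fin.lt_def] at hxy; omega) hxy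
  · intro h
    exact ⟨fun x y hxy hy => h x y hxy (by rw [Fin.lt_def] at hxy; omega),
      fun x y hx hxy => h x y hxy (by rw [Fin.lt_def] at hxy; omega)⟩

/-- Blocks are intervals on which an unshuffle is increasing. -/
theorem symm_add_one_of_mem_unshuffles (hσ : σ ∈ unshuffles p n) {a b : Fin n}
    (hab : (a : ℕ) + 1 = b) (hblock : ((σ.symm a : ℕ) < p ↔ (σ.symm b : ℕ) < p)) :
    (σ.symm a : ℕ) + 1 = σ.symm b := by
  rw [mem_unshuffles_iff] at hσ
  have ha : σ (σ.symm a) = a := σ.apply_symm_apply a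
  have hb : σ (σ.symm b) = b := σ.apply_symm_apply b
  have hlt : σ.symm a < σ.symm b := by
    refine lt_of_le_of_ne (not_lt.mp fun h => ?_) fun h => ?_
    · have := hσ _ _ h hblock.symm
      rw [ha, hb, Fin.lt_def] at this
      omega
    · rw [h, hb] at ha
      omega
  by_contra hne
  set z : Fin n := ⟨σ.symm a + 1, by rw [Fin.lt_def] at hlt; omega⟩
  have h₁ := hσ (σ.symm a) z (by rw [Fin.lt_def]; simp [z])
    (by rw [Fin.lt_def] at hlt; simp only [z]; omega)
  have h₂ := hσ z (σ.symm b) (by rw [Fin.lt_def] at hlt ⊢; simp only [z]; omega)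
    (by rw [Fin.lt_def] at hlt; simp only [z]; omega)
  rw [ha, Fin.lt_def] at h₁
  rw [hb, Fin.lt_def] at h₂
  omega

theorem swap_mul_mem_unshuffles (hσ : σ ∈ unshuffles p n) {a b : Fin n}
    (hab : (a : ℕ) + 1 = b) (hblock : ¬((σ.symm a : ℕ) < p ↔ (σ.symm b : ℕ) < p)) :
    swap a b * σ ∈ unshuffles p n := by
  rw [mem_unshuffles_iff] at hσ ⊢
  intro x y hxy hxyblock
  have hσxy := hσ x y hxy hxyblock
  refine (swap_lt_swap_iff hab (fun ⟨hx, hy⟩ => hblock ?_) fun ⟨hx, hy⟩ => ?_).mpr hσxy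
  · rwa [← hx, ← hy, σ.symm_apply_apply, σ.symm_apply_apply]
  · rw [hx, hy, Fin.lt_def] at hσxy
    omega

end Unshuffles

section CompTerm

variable {d : Fin 3 → ℤ} {ell : List (Fin 3) → Fin 3 → K}

theorem take_ofFn_add {α : Type*} {p m : ℕ} (f : Fin (p + m) → α) :
    (List.ofFn f).take p = List.ofFn (f ∘ Fin.castAdd m) := by
  rw [List.ofFn_add, List.take_left' (by simp)]
  rfl

theorem drop_ofFn_add {α : Type*} {p m : ℕ} (f : Fin (p + m) → α) :
    (List.ofFn f).drop p = List.ofFn (f ∘ Fin.natAdd p) := by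
  rw [List.ofFn_add, List.drop_left' (by simp)]
  rfl

theorem _root_.Fin.castAdd_ne_natAdd {p m : ℕ} (i : Fin p) (j : Fin m) :
    Fin.castAdd m i ≠ Fin.natAdd p j := by
  rw [Ne, Fin.ext_iff, Fin.val_castAdd, Fin.val_natAdd]
  omega

theorem cons_comp_swap_succ {α : Type*} {m : ℕ} (x : α) (f : Fin m → α) (i j : Fin m) :
    Fin.cons x (f ∘ swap i j) = (Fin.cons x f : Fin (m + 1) → α) ∘ swap i.succ j.succ := by
  funext q
  refine Fin.cases ?_ (fun q => ?_) q
  · rw [Function.comp_apply, swap_apply_of_ne_of_ne (Fin.succ_ne_zero i).symm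
      (Fin.succ_ne_zero j).symm]
    rfl
  · rw [Function.comp_apply, (Fin.succ_injective m).swap_apply]
    simp

theorem compTerm_ofFn_add {p m : ℕ} (f : Fin (p + m) → Fin 3) (k : Fin 3) :
    compTerm ell p f k =
      ∑ i : Fin 3, ell (List.ofFn (f ∘ Fin.castAdd m)) i *
        ell (List.ofFn (Fin.cons i (f ∘ Fin.natAdd p))) k := by
  simp only [compTerm, take_ofFn_add, drop_ofFn_add, List.ofFn_cons]

theorem compTerm_comp_swap_castAdd (hell : IsGradedSkew d ell) {p m : ℕ}
    (f : Fin (p + m) → Fin 3) {i j : Fin p} (hij : (i : ℕ) + 1 = j) :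
    compTerm ell p (f ∘ swap (Fin.castAdd m i) (Fin.castAdd m j)) =
      -ksign K (d (f (Fin.castAdd m i)) * d (f (Fin.castAdd m j))) • compTerm ell p f := by
  have hleft : (f ∘ swap (Fin.castAdd m i) (Fin.castAdd m j)) ∘ Fin.castAdd m =
      (f ∘ Fin.castAdd m) ∘ swap i j := by
    rw [Function.comp_assoc, (Fin.castAdd_injective p m).swap_comp]
    rfl
  have hright : (f ∘ swap (Fin.castAdd m i) (Fin.castAdd m j)) ∘ Fin.natAdd p =
      f ∘ Fin.natAdd p :=
    funext fun q => congrArg f (swap_apply_of_ne_of_ne (Fin.castAdd_ne_natAdd _ _).symm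
      (Fin.castAdd_ne_natAdd _ _).symm)
  funext k
  rw [compTerm_ofFn_add, hleft, hright, hell _ hij, Pi.smul_apply, compTerm_ofFn_add, smul_eq_mul,
    mul_sum]
  simp only [Pi.smul_apply, smul_eq_mul, Function.comp_apply, mul_assoc]

theorem compTerm_comp_swap_natAdd (hell : IsGradedSkew d ell) {p m : ℕ}
    (f : Fin (p + m) → Fin 3) {i j : Fin m} (hij : (i : ℕ) + 1 = j) :
    compTerm ell p (f ∘ swap (Fin.natAdd p i) (Fin.natAdd p j)) =
      -ksign K (d (f (Fin.natAdd p i)) * d (f (Fin.natAdd p j))) • compTerm ell p f := by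
  have hleft : (f ∘ swap (Fin.natAdd p i) (Fin.natAdd p j)) ∘ Fin.castAdd m =
      f ∘ Fin.castAdd m :=
    funext fun q => congrArg f (swap_apply_of_ne_of_ne (Fin.castAdd_ne_natAdd _ _)
      (Fin.castAdd_ne_natAdd _ _))
  have hright : (f ∘ swap (Fin.natAdd p i) (Fin.natAdd p j)) ∘ Fin.natAdd p =
      (f ∘ Fin.natAdd p) ∘ swap i j := by
    rw [Function.comp_assoc, (Fin.natAdd_injective m p).swap_comp]
    rfl
  have hsucc : (i.succ : ℕ) + 1 = j.succ := by simp [hij]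
  funext k
  rw [compTerm_ofFn_add, hleft, hright, Pi.smul_apply, compTerm_ofFn_add, smul_eq_mul, mul_sum]
  refine sum_congr rfl fun x _ => ?_
  rw [cons_comp_swap_succ, hell _ hsucc, Fin.cons_succ, Fin.cons_succ, Pi.smul_apply, smul_eq_mul]
  simp only [Function.comp_apply]
  ring

end CompTerm

section GradedSkew

variable {d : Fin 3 → ℤ} {ell : List (Fin 3) → Fin 3 → K} (hell : IsGradedSkew d ell)
include hell

theorem compTerm_comp_swap {n p : ℕ} (hp : p ≤ n) (f : Fin n → Fin 3) {i j : Fin n}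
    (hij : (i : ℕ) + 1 = j) (hblock : ((i : ℕ) < p ↔ (j : ℕ) < p)) :
    compTerm ell p (f ∘ swap i j) = -ksign K (d (f i) * d (f j)) • compTerm ell p f := by
  obtain ⟨m, rfl⟩ := Nat.exists_eq_add_of_le hp
  by_cases hj : (j : ℕ) < p
  · exact compTerm_comp_swap_castAdd hell f (i := ⟨i, by omega⟩) (j := ⟨j, hj⟩) hij
  · obtain ⟨i, rfl⟩ : ∃ i' : Fin m, Fin.natAdd p i' = i :=
      ⟨⟨i - p, by omega⟩, Fin.ext (by simp; omega)⟩
    obtain ⟨j, rfl⟩ : ∃ j' : Fin m, Fin.natAdd p j' = j :=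
      ⟨⟨j - p, by omega⟩, Fin.ext (by simp; omega)⟩
    exact compTerm_comp_swap_natAdd hell f (by simp at hij; omega)

theorem chiFn_smul_compTerm_swap_mul {n p : ℕ} (hp : p ≤ n) (g : Fin n → Fin 3) {u v : Fin n}
    (huv : (u : ℕ) + 1 = v) {σ : Perm (Fin n)} (hσ : σ ∈ unshuffles p n)
    (hblock : ((σ.symm u : ℕ) < p ↔ (σ.symm v : ℕ) < p)) :
    chiFn K d g (swap u v * σ) • compTerm ell p (g ∘ (swap u v * σ)) =
      chiFn K d g σ • compTerm ell p (g ∘ σ) := by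
  have hadj := symm_add_one_of_mem_unshuffles hσ huv hblock
  have hσswap : swap u v * σ = σ * swap (σ.symm u) (σ.symm v) := by
    rw [mul_swap_eq_swap_mul, σ.apply_symm_apply, σ.apply_symm_apply]
  rw [hσswap, chiFn_mul_swap d g hadj, Perm.coe_mul, ← Function.comp_assoc,
    compTerm_comp_swap hell hp _ hadj hblock, smul_smul]
  simp only [Function.comp_apply, σ.apply_symm_apply]
  rw [mul_right_comm, neg_ksign_mul_neg_ksign, one_mul]

theorem sum_unshuffles_swap_mul {n p : ℕ} (hp : p ≤ n) (g : Fin n → Fin 3) {u v : Fin n}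
    (huv : (u : ℕ) + 1 = v) :
    ∑ σ ∈ unshuffles p n, chiFn K d g (swap u v * σ) • compTerm ell p (g ∘ (swap u v * σ)) =
      ∑ σ ∈ unshuffles p n, chiFn K d g σ • compTerm ell p (g ∘ σ) := by
  let sameBlock : Perm (Fin n) → Prop := fun σ => ((σ.symm u : ℕ) < p ↔ (σ.symm v : ℕ) < p)
  rw [← sum_filter_add_sum_filter_not (unshuffles p n) sameBlock,
    ← sum_filter_add_sum_filter_not (unshuffles p n) sameBlock
      fun σ => chiFn K d g σ • compTerm ell p (g ∘ σ)]
  congr 1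
  · refine sum_congr rfl fun σ hσ => ?_
    rw [mem_filter] at hσ
    exact chiFn_smul_compTerm_swap_mul hell hp g huv hσ.1 hσ.2
  · -- across the blocks, `σ ↦ swap u v * σ` is an involution of the remaining unshuffles
    have hinv : ∀ σ : Perm (Fin n), swap u v * (swap u v * σ) = σ := fun σ => by
      rw [← mul_assoc, swap_mul_self, one_mul]
    have hmaps : ∀ σ ∈ (unshuffles p n).filter (¬sameBlock ·),
        swap u v * σ ∈ (unshuffles p n).filter (¬sameBlock ·) := by
      intro σ hσ
      rw [mem_filter] at hσ ⊢
      refine ⟨swap_mul_mem_unshuffles hσ.1 huv hσ.2, fun h => hσ.2 ?_⟩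
      simpa [sameBlock, Perm.mul_def, Iff.comm] using h
    exact sum_nbij' (swap u v * ·) (swap u v * ·) hmaps hmaps (fun σ _ => hinv σ)
      (fun σ _ => hinv σ) fun σ _ => rfl

theorem jacFn_comp_swap {n : ℕ} (g : Fin n → Fin 3) {u v : Fin n} (huv : (u : ℕ) + 1 = v) :
    jacFn K d ell (g ∘ swap u v) = -ksign K (d (g u) * d (g v)) • jacFn K d ell g := by
  unfold jacFn
  rw [smul_sum (r := -ksign K (d (g u) * d (g v)))]
  refine sum_congr rfl fun p hp => ?_
  rw [smul_comm (-ksign K (d (g u) * d (g v))) ((-1 : K) ^ (p * (n - p))),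
    ← sum_unshuffles_swap_mul hell (mem_Icc.mp hp).2 g huv,
    smul_sum (r := -ksign K (d (g u) * d (g v)))]
  refine congrArg _ (sum_congr rfl fun σ _ => ?_)
  rw [smul_smul, chiFn_swap_mul d g huv, ← mul_assoc, neg_ksign_mul_neg_ksign, one_mul]
  rfl

theorem jacFn_comp_perm_eq_zero_iff {n : ℕ} (g : Fin n → Fin 3) (π : Perm (Fin n)) :
    jacFn K d ell (g ∘ π) = 0 ↔ jacFn K d ell g = 0 := by
  cases n with
  | zero => rw [Subsingleton.elim π 1, Perm.coe_one, Function.comp_id]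
  | succ n =>
    have hπ : π ∈ Submonoid.closure (Set.range fun i : Fin n => swap i.castSucc i.succ) := by
      rw [Perm.mclosure_swap_castSucc_succ]
      trivial
    induction hπ using Submonoid.closure_induction generalizing g with
    | mem _ hσ =>
      obtain ⟨i, rfl⟩ := hσ
      rw [jacFn_comp_swap hell g (by simp), smul_eq_zero,
        or_iff_right (neg_ne_zero.mpr (ksign_ne_zero _))]
    | one => rw [Perm.coe_one, Function.comp_id]
    | mul σ τ _ _ hσ hτ =>
      rw [Perm.coe_mul, ← Function.comp_assoc]
      exact (hτ _).trans (hσ g)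

theorem jacFn_eq_zero_of_apply_eq [CharZero K] {n : ℕ} (g : Fin n → Fin 3) {q₁ q₂ : Fin n}
    (hne : q₁ ≠ q₂) (heq : g q₁ = g q₂) (heven : Even (d (g q₁))) : jacFn K d ell g = 0 := by
  wlog hlt : q₁ < q₂ generalizing q₁ q₂
  · exact this hne.symm heq.symm (heq ▸ heven) (lt_of_le_of_ne (not_lt.mp hlt) hne.symm)
  -- move the entry at `q₂` next to the one at `q₁`; the swap of two equal even entries is `-1`
  let r : Fin n := ⟨q₁ + 1, by rw [Fin.lt_def] at hlt; omega⟩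
  have hq₁r : q₁ ≠ r := Fin.ne_of_lt (by simp [Fin.lt_def, r])
  set f := g ∘ swap r q₂
  have hf₁ : f q₁ = g q₁ := congrArg g (swap_apply_of_ne_of_ne hq₁r hne)
  have hfr : f r = g q₁ := (congrArg g (swap_apply_left r q₂)).trans heq.symm
  have hfix : f ∘ swap q₁ r = f := by
    rw [comp_swap_eq_update, hf₁, ← hfr, Function.update_eq_self, hfr, ← hf₁,
      Function.update_eq_self]
  have hskew := jacFn_comp_swap hell f (u := q₁) (v := r) rfl
  rw [hfix, hf₁, hfr, ksign, if_pos (heven.mul_left _), neg_one_smul, self_eq_neg] at hskew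
  rwa [jacFn_comp_perm_eq_zero_iff hell] at hskew

end GradedSkew

section Ell012

variable (a b c : ℕ → K)

theorem ell012_eq_zero_of_two_le_count {l : List (Fin 3)} {z : Fin 3} (hz : z = 0 ∨ z = 2)
    (h : 2 ≤ l.count z) : ell012 a b c l = 0 := by
  unfold ell012
  rcases hz with rfl | rfl <;> rw [if_neg, if_neg, if_neg, smul_zero] <;> omega

theorem ell012_of_perm {l l' : List (Fin 3)} (hl : l'.Perm l) :
    ell012 a b c l' = (sortSign K ![0, 1, 2] l' * sortSign K ![0, 1, 2] l) • ell012 a b c l := by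
  unfold ell012
  rw [hl.length_eq, hl.count_eq, hl.count_eq, smul_smul, mul_assoc, sortSign_mul_self, mul_one]

theorem isGradedSkew_ell012 : IsGradedSkew ![0, 1, 2] (ell012 a b c) := by
  intro m h i j hij
  rw [ell012_of_perm a b c ((swap i j).ofFn_comp_perm h), sortSign_ofFn, sortSign_ofFn,
    sortSignFn_comp_swap _ h hij, mul_assoc, ← sortSign_ofFn, sortSign_mul_self, mul_one]
  split_ifs with hh
  · by_cases h₁ : h i = 1
    · simp [← hh, h₁, ksign]
    have hne : i ≠ j := Fin.ne_of_lt (by simp only [Fin.lt_def]; omega)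
    rw [ell012_eq_zero_of_two_le_count a b c (by omega) (two_le_count_ofFn hne hh), smul_zero,
      smul_zero]
  · rfl

theorem ell012_apply_ne_zero {l : List (Fin 3)} {k : Fin 3} (h : ell012 a b c l k ≠ 0) :
    l.count 0 = 1 ∧ l.count 2 = 0 ∧ k = 1 ∨ l.count 0 = 0 ∧ l.count 2 = 0 ∧ k = 2 ∨
      l.count 0 = 1 ∧ l.count 2 = 1 ∧ k = 2 := by
  unfold ell012 at h
  split_ifs at h with h₁ h₂ h₃
  · exact Or.inl ⟨h₁.1, h₁.2, of_not_not fun hk => h (by simp [hk])⟩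
  · exact Or.inr (Or.inl ⟨h₂.1, h₂.2, of_not_not fun hk => h (by simp [hk])⟩)
  · exact Or.inr (Or.inr ⟨h₃.1, h₃.2, of_not_not fun hk => h (by simp [hk])⟩)
  · exact absurd (by simp) h

theorem compTerm_ell012_eq_zero {n : ℕ} (p : ℕ) (f : Fin n → Fin 3)
    (h : ¬((List.ofFn f).count 0 = 2 ∨ (List.ofFn f).count 0 = 1 ∧ (List.ofFn f).count 2 = 0)) :
    compTerm (ell012 a b c) p f = 0 := by
  funext k
  refine sum_eq_zero fun i _ => ?_
  by_contra hne
  obtain ⟨hl, hr⟩ := mul_ne_zero_iff.mp hne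
  have hcount : ∀ z : Fin 3, ((List.ofFn f).take p).count z + ((List.ofFn f).drop p).count z =
      (List.ofFn f).count z := fun z => by rw [← List.count_append, List.take_append_drop]
  have h₀ := hcount 0
  have h₂ := hcount 2
  rcases ell012_apply_ne_zero a b c hl with ⟨hl₀, hl₂, rfl⟩ | ⟨hl₀, hl₂, rfl⟩ | ⟨hl₀, hl₂, rfl⟩ <;>
    rcases ell012_apply_ne_zero a b c hr with ⟨hr₀, hr₂, -⟩ | ⟨hr₀, hr₂, -⟩ | ⟨hr₀, hr₂, -⟩ <;>
    simp at hr₀ hr₂ <;> omega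

theorem jacFn_ell012_eq_zero {n : ℕ} (g : Fin n → Fin 3)
    (h : ¬((List.ofFn g).count 0 = 2 ∨ (List.ofFn g).count 0 = 1 ∧ (List.ofFn g).count 2 = 0)) :
    jacFn K ![0, 1, 2] (ell012 a b c) g = 0 := by
  refine sum_eq_zero fun p _ => ?_
  rw [sum_eq_zero fun σ _ => ?_, smul_zero]
  rw [compTerm_ell012_eq_zero a b c p _ (by simpa only [(σ.ofFn_comp_perm g).count_eq]),
    smul_zero]

end Ell012

theorem exists_eq_cons_comp_swap {m : ℕ} {g : Fin (m + 1) → Fin 3}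
    (h₀ : (List.ofFn g).count 0 = 1) (h₂ : (List.ofFn g).count 2 = 0) :
    ∃ q, g = (Fin.cons 0 fun _ => 1 : Fin (m + 1) → Fin 3) ∘ swap 0 q := by
  rw [count_ofFn] at h₀ h₂
  obtain ⟨q, hq⟩ := card_eq_one.mp h₀
  have hzero : ∀ s, g s = 0 ↔ s = q := fun s => by
    simpa using congrArg (s ∈ ·) hq
  have htwo : ∀ s, g s ≠ 2 := fun s hs => by
    simpa [hs] using congrArg (s ∈ ·) (card_eq_zero.mp h₂)
  refine ⟨q, funext fun s => ?_⟩
  by_cases hs : s = q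
  · rw [(hzero s).mpr hs, Function.comp_apply, hs, swap_apply_right, Fin.cons_zero]
  · obtain ⟨t, ht⟩ := Fin.exists_succ_eq.mpr (show swap 0 q s ≠ 0 by
      rwa [Ne, swap_apply_eq_iff, swap_apply_left])
    rw [Function.comp_apply, ← ht, Fin.cons_succ]
    have h₀ := (hzero s).not.mpr hs
    have h₂ := htwo s
    omega

end Jacobi

open Jacobi

theorem stmt0_general {K : Type*} [Field K] [CharZero K] (a b c : ℕ → K)
    (n : ℕ) (hn : 1 ≤ n) :
    (∀ xs : List (Fin 3), xs.length = n → Jac K ![0, 1, 2] (ell012 a b c) xs = 0) ↔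
      Jac K ![0, 1, 2] (ell012 a b c) ((0 : Fin 3) :: List.replicate (n - 1) 1) = 0 := by
  obtain ⟨m, rfl⟩ := Nat.exists_eq_add_of_le' hn
  have hv : (0 : Fin 3) :: List.replicate (m + 1 - 1) 1 =
      List.ofFn (Fin.cons 0 fun _ => 1 : Fin (m + 1) → Fin 3) := by
    simp [List.ofFn_const]
  rw [hv]
  refine ⟨fun h => h _ List.length_ofFn, fun h xs hxs => ?_⟩
  obtain ⟨g, rfl⟩ : ∃ g : Fin (m + 1) → Fin 3, List.ofFn g = xs :=
    ⟨fun i => xs[i], List.ext_getElem (by simp [hxs]) fun _ _ _ => List.getElem_ofFn ..⟩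
  rw [jac_ofFn] at h ⊢
  have hskew := isGradedSkew_ell012 a b c
  by_cases hcount :
      (List.ofFn g).count 0 = 2 ∨ (List.ofFn g).count 0 = 1 ∧ (List.ofFn g).count 2 = 0
  · rcases hcount with h₀ | ⟨h₀, h₂⟩
    · obtain ⟨q₁, q₂, hne, hq₁, hq₂⟩ := exists_ne_of_one_lt_count (f := g) (z := 0) (by omega)
      exact jacFn_eq_zero_of_apply_eq hskew g hne (hq₁.trans hq₂.symm) (by simp [hq₁])
    · obtain ⟨q, rfl⟩ := exists_eq_cons_comp_swap h₀ h₂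
      exact (jacFn_comp_perm_eq_zero_iff hskew _ _).mpr h
  · exact jacFn_ell012_eq_zero a b c g hcount

/-- For `V = V₀ ⊕ V₁ ⊕ V₂` with the operators determined by `a, b, c`
(`c₁ = 0`), `Jₙ` vanishes identically iff `Jₙ(v ⊗ w^{⊗(n-1)}) = 0`. -/
theorem stmt0 {K : Type*} [Field K] [CharZero K] (a b c : ℕ → K) (hc : c 1 = 0)
    (n : ℕ) (hn : 1 ≤ n) :
    (∀ xs : List (Fin 3), xs.length = n → Jac K ![0, 1, 2] (ell012 a b c) xs = 0) ↔
      Jac K ![0, 1, 2] (ell012 a b c) ((0 : Fin 3) :: List.replicate (n - 1) 1) = 0 :=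
  stmt0_general a b c n hn
end

section
/- Let (aₙ), (bₙ), (cₙ) be sequences in a field of characteristic zero with c₁ = 0. Suppose that for every n ∈ ℕ the identity Σ_{p=1}^n (−1)^{p(n−p)}(−1)ⁿ b_p [ −C(n−1, n−p)·a_{n−p+1} + C(n−1, p)·c_{n−p+1} ] = 0 holds (the L∞ condition for V₀ ⊕ V₁ ⊕ V₂). If a₁ ≠ 0, then bₙ = 0 for all n ∈ ℕ. -/
open Finset Equiv

/-- The numerical reduction of the `n`-th generalized Jacobi identity for
`V₀ ⊕ V₁ ⊕ V₂`. -/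
def Jsum {K : Type*} [Field K] (a b c : ℕ → K) (n : ℕ) : K :=
  ∑ p ∈ Finset.Icc 1 n, (-1 : K) ^ (p * (n - p)) * (-1 : K) ^ n * b p *
    (-(((n - 1).choose (n - p) : K)) * a (n - p + 1) +
      ((n - 1).choose p : K) * c (n - p + 1))

/-- Once `b` vanishes below `n`, only the `p = n` term of `Jsum` survives, and there
`C(n-1, n) = 0` kills the `c`-part. -/
theorem Jsum_eq_of_forall_lt_eq_zero {K : Type*} [Field K] (a b c : ℕ → K) {n : ℕ}
    (hn : 1 ≤ n) (hb : ∀ p, 1 ≤ p → p < n → b p = 0) :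
    Jsum a b c n = -((-1 : K) ^ n * b n * a 1) := by
  unfold Jsum
  rw [Finset.sum_eq_single_of_mem n (Finset.mem_Icc.mpr ⟨hn, le_rfl⟩)]
  · simp [Nat.choose_eq_zero_of_lt (Nat.sub_lt hn one_pos)]
  · intro p hp hpn
    obtain ⟨hp1, hpn'⟩ := Finset.mem_Icc.mp hp
    simp [hb p hp1 (lt_of_le_of_ne hpn' hpn)]

theorem stmt2_general {K : Type*} [Field K] (a b c : ℕ → K)
    (hJ : ∀ n : ℕ, 1 ≤ n → Jsum a b c n = 0) (ha : a 1 ≠ 0) :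
    ∀ n : ℕ, 1 ≤ n → b n = 0 := by
  intro n
  induction n using Nat.strong_induction_on with
  | _ n ih =>
    intro hn
    have hJn := hJ n hn
    rw [Jsum_eq_of_forall_lt_eq_zero a b c hn fun p hp hpn => ih p hpn hp] at hJn
    simpa [ha] using hJn

/-- If the L∞ condition for `V₀ ⊕ V₁ ⊕ V₂` holds and `a₁ ≠ 0`, then all `bₙ`
vanish. -/
theorem stmt2 {K : Type*} [Field K] [CharZero K] (a b c : ℕ → K) (hc : c 1 = 0)
    (hJ : ∀ n : ℕ, 1 ≤ n → Jsum a b c n = 0) (ha : a 1 ≠ 0) :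
    ∀ n : ℕ, 1 ≤ n → b n = 0 :=
  stmt2_general a b c hJ ha
end

section
/- Let (aₙ), (bₙ), (cₙ) be sequences in a field of characteristic zero with c₁ = 0 and a₁ = 0. Fix 1 ≤ k < n, and suppose b_p = 0 for all p < k and b_k ≠ 0. Then the identity Σ_{p=1}^n (−1)^{p(n−p)}(−1)ⁿ b_p [ −C(n−1, n−p)·a_{n−p+1} + C(n−1, p)·c_{n−p+1} ] = 0 holds if and only if a_{n−k+1} = ((n−k)/k)·c_{n−k+1} + [ Σ_{q=2}^{n−k} (−1)^{q(n−q)} b_{n−q+1} ( C(n−1, q−1)·a_q − C(n−1, q−2)·c_q ) ] / [ (−1)^{k(n−k)+n} C(n−1, n−k) b_k ]. -/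
open Finset Equiv

def jsumTerm {K : Type*} [Field K] (a b c : ℕ → K) (n p : ℕ) : K :=
  (-1 : K) ^ (p * (n - p)) * (-1 : K) ^ n * b p *
    (-(((n - 1).choose (n - p) : K)) * a (n - p + 1) + ((n - 1).choose p : K) * c (n - p + 1))

lemma jsumTerm_succ_add {K : Type*} [Field K] (a b c : ℕ → K) (s t : ℕ) (ht : 1 ≤ t) :
    jsumTerm a b c (s + t + 1) (s + 1) =
      (-1 : K) ^ ((t + 1) * s) * b (s + 1) *
        (((s + t).choose t : K) * a (t + 1) - ((s + t).choose (t - 1) : K) * c (t + 1)) := by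
  have hchoose : (s + t).choose (s + 1) = (s + t).choose (t - 1) :=
    Nat.choose_symm_of_eq_add (by omega)
  have hsign : (-1 : K) ^ ((s + 1) * t) * (-1 : K) ^ (s + t + 1) = -(-1 : K) ^ ((t + 1) * s) := by
    rw [← pow_add, show (s + 1) * t + (s + t + 1) = (t + 1) * s + 1 + 2 * t by ring,
      pow_add, pow_mul, neg_one_sq, one_pow, mul_one, pow_succ, mul_neg_one]
  simp only [jsumTerm, show s + t + 1 - (s + 1) = t by omega, Nat.add_sub_cancel, hchoose, hsign]
  ring

/-- The terms `p < k` vanish with `b p`, the term `p = n` vanishes since `a 1 = 0` and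
`C(n-1, n) = 0`, and the terms `k < p < n` are reindexed by `q = n - p + 1`. -/
lemma Jsum_eq_jsumTerm_add_sum {K : Type*} [Field K] (a b c : ℕ → K) (ha1 : a 1 = 0)
    (k n : ℕ) (hk1 : 1 ≤ k) (hkn : k < n) (hb0 : ∀ p : ℕ, p < k → b p = 0) :
    Jsum a b c n = jsumTerm a b c n k +
      ∑ q ∈ Icc 2 (n - k), (-1 : K) ^ (q * (n - q)) * b (n - q + 1) *
        (((n - 1).choose (q - 1) : K) * a q - ((n - 1).choose (q - 2) : K) * c q) := by
  have hrestrict : Jsum a b c n = ∑ p ∈ Icc k (n - 1), jsumTerm a b c n p := by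
    refine (sum_subset (fun p hp => ?_) fun p hp hp' => ?_).symm
    · simp only [mem_Icc] at hp ⊢; omega
    simp only [mem_Icc] at hp hp'
    rcases lt_or_ge p k with hpk | hkp
    · simp [hb0 p hpk]
    · obtain rfl : n = p := by omega
      simp [ha1, Nat.choose_eq_zero_of_lt (show n - 1 < n by omega)]
  have hsplit : Icc k (n - 1) = insert k (Icc (k + 1) (n - 1)) := by
    ext p; simp only [mem_Icc, mem_insert]; omega
  rw [hrestrict, hsplit, sum_insert (by simp), add_right_inj]
  refine sum_nbij' (fun p => n - p + 1) (fun q => n - q + 1) (fun p hp => ?_) (fun q hq => ?_)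
    (fun p hp => ?_) (fun q hq => ?_) fun p hp => ?_ <;> simp only [mem_Icc] at *
  · omega
  · omega
  · omega
  · omega
  · obtain ⟨s, rfl⟩ : ∃ s, p = s + 1 := ⟨p - 1, by omega⟩
    obtain ⟨t, rfl⟩ : ∃ t, n = s + t + 1 := ⟨n - s - 1, by omega⟩
    rw [jsumTerm_succ_add a b c s t (by omega), show s + t + 1 - (s + 1) + 1 = t + 1 by omega,
      show s + t + 1 - (t + 1) = s by omega, Nat.add_sub_cancel]
    rfl

lemma mul_choose_eq_sub_mul_choose_sub {k n : ℕ} (hk1 : 1 ≤ k) (hkn : k < n) :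
    k * (n - 1).choose k = (n - k) * (n - 1).choose (n - k) := by
  obtain ⟨j, rfl⟩ : ∃ j, k = j + 1 := ⟨k - 1, by omega⟩
  have hsucc := Nat.choose_succ_right_eq (n - 1) j
  rw [show n - 1 - j = n - (j + 1) by omega] at hsucc
  rw [Nat.choose_symm_of_eq_add (show n - 1 = n - (j + 1) + j by omega), mul_comm, hsucc, mul_comm]

lemma add_eq_zero_iff_eq_add_div {K : Type*} [Field K] {D x y S : K} (hD : D ≠ 0) :
    D * (x - y) + S = 0 ↔ y = x + S / D := by
  have hfactor : D * (x - y) + S = D * (x + S / D - y) := by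
    field_simp
    ring
  rw [hfactor, mul_eq_zero, or_iff_right hD, sub_eq_zero, eq_comm]

theorem stmt3_general {K : Type*} [Field K] [CharZero K] (a b c : ℕ → K)
    (ha1 : a 1 = 0) (k n : ℕ) (hk1 : 1 ≤ k) (hkn : k < n)
    (hb0 : ∀ p : ℕ, p < k → b p = 0) (hbk : b k ≠ 0) :
    Jsum a b c n = 0 ↔
      a (n - k + 1) =
        ((n - k : ℕ) : K) / (k : K) * c (n - k + 1) +
        (∑ q ∈ Finset.Icc 2 (n - k), (-1 : K) ^ (q * (n - q)) * b (n - q + 1) *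
            (((n - 1).choose (q - 1) : K) * a q - ((n - 1).choose (q - 2) : K) * c q)) /
          ((-1 : K) ^ (k * (n - k) + n) * ((n - 1).choose (n - k) : K) * b k) := by
  have hk : (k : K) ≠ 0 := Nat.cast_ne_zero.mpr (by omega)
  have hchoose : ((n - 1).choose (n - k) : K) ≠ 0 :=
    Nat.cast_ne_zero.mpr (Nat.choose_pos (by omega)).ne'
  have hD : (-1 : K) ^ (k * (n - k) + n) * ((n - 1).choose (n - k) : K) * b k ≠ 0 :=
    mul_ne_zero (mul_ne_zero (pow_ne_zero _ (by norm_num)) hchoose) hbk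
  have hleading : jsumTerm a b c n k =
      (-1 : K) ^ (k * (n - k) + n) * ((n - 1).choose (n - k) : K) * b k *
        (((n - k : ℕ) : K) / k * c (n - k + 1) - a (n - k + 1)) := by
    have hsymm :
        (k : K) * ((n - 1).choose k : K) = ((n - k : ℕ) : K) * ((n - 1).choose (n - k) : K) :=
      mod_cast mul_choose_eq_sub_mul_choose_sub hk1 hkn
    rw [jsumTerm, pow_add]
    field_simp
    linear_combination c (n - k + 1) * hsymm
  rw [Jsum_eq_jsumTerm_add_sum a b c ha1 k n hk1 hkn hb0, hleading, add_eq_zero_iff_eq_add_div hD]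

/-- If `b_p = 0` for `p < k` and `b_k ≠ 0` (with `a₁ = 0`, `c₁ = 0`,
`1 ≤ k < n`), then the `n`-th Jacobi identity holds iff `a_{n-k+1}` is given by
the explicit formula. -/
theorem stmt3 {K : Type*} [Field K] [CharZero K] (a b c : ℕ → K) (hc : c 1 = 0)
    (ha1 : a 1 = 0) (k n : ℕ) (hk1 : 1 ≤ k) (hkn : k < n)
    (hb0 : ∀ p : ℕ, p < k → b p = 0) (hbk : b k ≠ 0) :
    Jsum a b c n = 0 ↔
      a (n - k + 1) =
        ((n - k : ℕ) : K) / (k : K) * c (n - k + 1) +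
        (∑ q ∈ Finset.Icc 2 (n - k), (-1 : K) ^ (q * (n - q)) * b (n - q + 1) *
            (((n - 1).choose (q - 1) : K) * a q - ((n - 1).choose (q - 2) : K) * c q)) /
          ((-1 : K) ^ (k * (n - k) + n) * ((n - 1).choose (n - k) : K) * b k) :=
  stmt3_general a b c ha1 k n hk1 hkn hb0 hbk
end

section
/- Let V = V₀ ⊕ V₁ ⊕ V₂ with one-dimensional components and structure constants (aₙ), (bₙ), (cₙ) satisfying the L₃ conditions: a₁b₁ = 0, b₁a₂ − b₁c₂ − b₂a₁ = 0, and b₁(a₃ − 2c₃) + b₂(2a₂ − c₂) + b₃a₁ = 0. Then (2a₂ − c₂)·b₂ = 0 (the condition that V is a differential graded Lie algebra) holds if and only if b₁ = 0 or b₂ = 0 or a₂ = 0. -/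
open Finset Equiv

/-!
If `b₁ ≠ 0`, then `J₁ = 0` forces `a₁ = 0` and `J₂ = 0` then forces `c₂ = a₂`, so the d.g. Lie
condition reads `a₂ b₂ = 0`. If `b₁ = 0`, then `J₂ = 0` gives `a₁ b₂ = 0`, and multiplying `J₃` by
`(2a₂ − c₂) b₂` shows that `((2a₂ − c₂) b₂)² = 0`, so the d.g. Lie condition holds outright.
-/

section L3Constants

variable {R : Type*} [CommRing R] [NoZeroDivisors R] {a b c : ℕ → R}

theorem c_two_eq_a_two_of_b_one_ne_zero (h1 : a 1 * b 1 = 0)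
    (h2 : b 1 * a 2 - b 1 * c 2 - b 2 * a 1 = 0) (hb1 : b 1 ≠ 0) : c 2 = a 2 := by
  have ha1 : a 1 = 0 := (mul_eq_zero.mp h1).resolve_right hb1
  have : b 1 * (a 2 - c 2) = 0 := by linear_combination h2 + b 2 * ha1
  exact (sub_eq_zero.mp ((mul_eq_zero.mp this).resolve_left hb1)).symm

theorem dgLie_of_b_one_eq_zero (h2 : b 1 * a 2 - b 1 * c 2 - b 2 * a 1 = 0)
    (h3 : b 1 * (a 3 - 2 * c 3) + b 2 * (2 * a 2 - c 2) + b 3 * a 1 = 0) (hb1 : b 1 = 0) :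
    (2 * a 2 - c 2) * b 2 = 0 := by
  rw [hb1] at h2 h3
  refine pow_eq_zero_iff two_ne_zero |>.mp ?_
  linear_combination (2 * a 2 - c 2) * b 2 * h3 + (2 * a 2 - c 2) * b 3 * h2

end L3Constants

theorem stmt7_general {K : Type*} [Field K] (a b c : ℕ → K)
    (h1 : a 1 * b 1 = 0)
    (h2 : b 1 * a 2 - b 1 * c 2 - b 2 * a 1 = 0)
    (h3 : b 1 * (a 3 - 2 * c 3) + b 2 * (2 * a 2 - c 2) + b 3 * a 1 = 0) :
    (2 * a 2 - c 2) * b 2 = 0 ↔ (b 1 = 0 ∨ b 2 = 0 ∨ a 2 = 0) := by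
  by_cases hb1 : b 1 = 0
  · exact iff_of_true (dgLie_of_b_one_eq_zero h2 h3 hb1) (Or.inl hb1)
  · rw [c_two_eq_a_two_of_b_one_ne_zero h1 h2 hb1, two_mul, add_sub_cancel_right, mul_eq_zero]
    simp only [hb1, false_or, or_comm]

/-- An `L₃` structure on `V₀ ⊕ V₁ ⊕ V₂` is a d.g. Lie algebra iff `b₁ = 0` or
`b₂ = 0` or `a₂ = 0`. -/
theorem stmt7 {K : Type*} [Field K] [CharZero K] (a b c : ℕ → K) (hc : c 1 = 0)
    (h1 : a 1 * b 1 = 0)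
    (h2 : b 1 * a 2 - b 1 * c 2 - b 2 * a 1 = 0)
    (h3 : b 1 * (a 3 - 2 * c 3) + b 2 * (2 * a 2 - c 2) + b 3 * a 1 = 0) :
    (2 * a 2 - c 2) * b 2 = 0 ↔ (b 1 = 0 ∨ b 2 = 0 ∨ a 2 = 0) :=
  stmt7_general a b c h1 h2 h3
end

section
/- With V = V₋₁ ⊕ V₀ ⊕ V₁ (one-dimensional components u, v, w) and structure constants aₙ, bₙ, cₙ as above, Jₙ(u⊗w^{⊗(n−1)}) = Σ_{p=1}^n (−1)^{p(n−p)} C(n−1, p−1) b_p c_{n−p+1} · w. -/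
open Finset Equiv

/-- The operators on `V₋₁ ⊕ V₀ ⊕ V₁` (basis `u = 0, v = 1, w = 2`, of degrees
`-1, 0, 1`) determined by constants `a, b, c`:  `lₙ(u⊗v⊗w^{n-2}) = aₙ u`,
`lₙ(u⊗w^{n-1}) = bₙ v`, `lₙ(v⊗w^{n-1}) = cₙ w`, all other values zero,
extended skew-symmetrically. -/
def ellm {K : Type*} [Field K] (a b c : ℕ → K) (xs : List (Fin 3)) : Fin 3 → K :=
  sortSign K ![-1, 0, 1] xs •
    (if xs.count 0 = 1 ∧ xs.count 1 = 1 then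
        (fun j : Fin 3 => if j = 0 then a xs.length else 0)
      else if xs.count 0 = 1 ∧ xs.count 1 = 0 then
        (fun j : Fin 3 => if j = 1 then b xs.length else 0)
      else if xs.count 0 = 0 ∧ xs.count 1 = 1 then
        (fun j : Fin 3 => if j = 2 then c xs.length else 0)
      else 0)

/-!
Every letter of `u ⊗ w^{⊗(n-1)}` has odd degree, so each Koszul sign `χ(σ)` is `1`: the sign
of `σ` and the product of the signs of its inversions of odd letters cancel. For a
`(p, n-p)`-unshuffle `σ`, `l_p` receives either `w^{⊗p}`, where it vanishes, or, exactly when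
`σ` keeps `u` in front (`σ 0 = 0`), the word `u ⊗ w^{⊗(p-1)}`; then `l_p` gives `b_p v` and
`l_{n-p+1}(v ⊗ w^{⊗(n-p)}) = c_{n-p+1} w`. An unshuffle is determined by the image of its first
block, so those with `σ 0 = 0` correspond to the `p`-subsets of `Fin n` containing `0`, of which
there are `C(n-1, p-1)`.
-/

namespace Equiv.Perm

theorem sign_eq_signAux {n : ℕ} (σ : Perm (Fin n)) : sign σ = signAux σ := by
  induction σ using swap_induction_on with
  | one => simp
  | swap_mul f x y hxy ih => rw [sign_mul, signAux_mul, sign_swap hxy, signAux_swap hxy, ih]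

theorem sign_eq_neg_one_pow_card_inversions {n : ℕ} (σ : Perm (Fin n)) :
    sign σ = (-1) ^ #{q : Fin n × Fin n | q.1 < q.2 ∧ σ q.2 < σ q.1} := by
  rw [sign_eq_signAux, signAux, prod_ite, prod_const_one, prod_const, mul_one]
  congr 1
  refine card_nbij' (fun q => (q.2, q.1)) (fun q => ⟨q.2, q.1⟩) ?_ ?_ (fun _ _ => rfl)
    (fun _ _ => rfl)
  · intro q hq
    simp only [mem_coe, mem_filter, mem_finPairsLT, mem_univ, true_and] at hq ⊢
    exact ⟨hq.1, hq.2.lt_of_ne (σ.injective.ne hq.1.ne')⟩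
  · intro q hq
    simp only [mem_coe, mem_filter, mem_finPairsLT, mem_univ, true_and] at hq ⊢
    exact ⟨hq.1, hq.2.le⟩

end Equiv.Perm

lemma chi_eq_one_of_odd {K : Type*} [Field K] (d : Fin 3 → ℤ) (xs : List (Fin 3))
    (σ : Perm (Fin xs.length)) (hodd : ∀ s, Odd (d (xs.get s))) : chi K d xs σ = 1 := by
  have hk : ∀ s t, ksign K (d (xs.get s) * d (xs.get t)) = -1 := fun s t =>
    if_neg (Int.not_even_iff_odd.mpr ((hodd s).mul (hodd t)))
  rw [chi, Perm.sign_eq_neg_one_pow_card_inversions, prod_congr rfl fun q _ => hk _ _,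
    prod_const]
  push_cast
  rw [← pow_add, ← two_mul, pow_mul, neg_one_sq, one_pow]

section Unshuffles

variable {n p : ℕ}

def frontImage (p : ℕ) (σ : Perm (Fin n)) : Finset (Fin n) :=
  (univ.filter fun i : Fin n => (i : ℕ) < p).map σ.toEmbedding

lemma apply_mem_frontImage_iff {σ : Perm (Fin n)} {i : Fin n} :
    σ i ∈ frontImage p σ ↔ (i : ℕ) < p := by
  simp [frontImage]

lemma mem_frontImage_iff {σ : Perm (Fin n)} {j : Fin n} :
    j ∈ frontImage p σ ↔ (σ.symm j : ℕ) < p := by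
  simp [frontImage, mem_map_equiv]

lemma card_frontImage (hp : p ≤ n) (σ : Perm (Fin n)) : #(frontImage p σ) = p := by
  rw [frontImage, card_map, Fin.card_filter_val_lt, min_eq_right hp]

lemma card_compl_frontImage (hp : p ≤ n) (σ : Perm (Fin n)) :
    #(frontImage p σ)ᶜ = n - p := by
  rw [card_compl, card_frontImage hp, Fintype.card_fin]

lemma unshuffle_apply_of_lt {σ : Perm (Fin n)} (hσ : σ ∈ unshuffles p n) (hp : p ≤ n)
    (i : Fin n) (hi : (i : ℕ) < p) :
    σ i = (frontImage p σ).orderEmbOfFin (card_frontImage hp σ) ⟨i, hi⟩ := by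
  have hfront : (fun t : Fin p => σ (Fin.castLE hp t))
      = (frontImage p σ).orderEmbOfFin (card_frontImage hp σ) :=
    orderEmbOfFin_unique _ (fun t => apply_mem_frontImage_iff.mpr t.isLt)
      fun s t hst => (mem_filter.mp hσ).2.1 _ _ hst t.isLt
  exact congrFun hfront ⟨i, hi⟩

lemma unshuffle_apply_of_le {σ : Perm (Fin n)} (hσ : σ ∈ unshuffles p n) (hp : p ≤ n)
    (i : Fin n) (hi : p ≤ (i : ℕ)) :
    σ i =
      (frontImage p σ)ᶜ.orderEmbOfFin (card_compl_frontImage hp σ) ⟨i - p, by omega⟩ := by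
  have hback : (fun t : Fin (n - p) => σ ⟨p + t, by omega⟩)
      = (frontImage p σ)ᶜ.orderEmbOfFin (card_compl_frontImage hp σ) :=
    orderEmbOfFin_unique _ (fun t => by simp [apply_mem_frontImage_iff])
      fun s t hst => (mem_filter.mp hσ).2.2 _ _ (by simp) (by simpa using hst)
  convert congrFun hback ⟨i - p, by omega⟩ using 2
  ext
  simp only
  omega

lemma injOn_frontImage (hp : p ≤ n) :
    Set.InjOn (frontImage p) (unshuffles p n : Set (Perm (Fin n))) := by
  intro σ hσ τ hτ hστ
  ext i : 1
  by_cases hi : (i : ℕ) < p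
  · rw [unshuffle_apply_of_lt hσ hp i hi, unshuffle_apply_of_lt hτ hp i hi]
    simp only [hστ]
  · rw [unshuffle_apply_of_le hσ hp i (not_lt.mp hi),
      unshuffle_apply_of_le hτ hp i (not_lt.mp hi)]
    simp only [hστ]

lemma exists_unshuffle_frontImage_eq (hp : p ≤ n) {A : Finset (Fin n)} (hA : #A = p) :
    ∃ σ ∈ unshuffles p n, frontImage p σ = A := by
  obtain ⟨m, rfl⟩ := Nat.exists_eq_add_of_le hp
  have hAc : #Aᶜ = m := by rw [card_compl, Fintype.card_fin, hA, Nat.add_sub_cancel_left]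
  set σ : Perm (Fin (p + m)) := finSumFinEquiv.symm.trans (finSumEquivOfFinset hA hAc)
  have hσl : ∀ i, σ (Fin.castAdd m i) = A.orderEmbOfFin hA i := by simp [σ]
  have hσr : ∀ i, σ (Fin.natAdd p i) = Aᶜ.orderEmbOfFin hAc i := by simp [σ]
  refine ⟨σ, mem_filter.mpr ⟨mem_univ _, ?_, ?_⟩, ?_⟩
  · intro i j hij hj
    induction i using Fin.addCases with
    | right i => simp only [Fin.lt_def, Fin.val_natAdd] at hij; omega
    | left i =>
      induction j using Fin.addCases with
      | right j => simp at hj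
      | left j =>
        rw [hσl, hσl]
        exact (A.orderEmbOfFin hA).strictMono hij
  · intro i j hi hij
    induction i using Fin.addCases with
    | left i => simp only [Fin.val_castAdd] at hi; omega
    | right i =>
      induction j using Fin.addCases with
      | left j => simp only [Fin.lt_def, Fin.val_natAdd, Fin.val_castAdd] at hij; omega
      | right j =>
        rw [hσr, hσr]
        exact (Aᶜ.orderEmbOfFin hAc).strictMono ((Fin.natAdd_lt_natAdd_iff p).mp hij)
  · ext j
    obtain ⟨i, rfl⟩ := σ.surjective j
    rw [apply_mem_frontImage_iff]
    induction i using Fin.addCases with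
    | left i => simp [hσl]
    | right i => simp [hσr, mem_compl.mp (Aᶜ.orderEmbOfFin_mem hAc i)]

lemma unshuffle_apply_zero_eq_zero_iff [NeZero n] (hp : 0 < p) {σ : Perm (Fin n)}
    (hσ : σ ∈ unshuffles p n) : σ 0 = 0 ↔ 0 ∈ frontImage p σ := by
  rw [mem_frontImage_iff, ← Equiv.eq_symm_apply]
  have ht : σ (σ.symm 0) = 0 := σ.apply_symm_apply 0
  generalize σ.symm 0 = t at ht ⊢
  refine ⟨fun h => h ▸ hp, fun htp => ?_⟩
  by_contra h0t
  have := (mem_filter.mp hσ).2.1 0 t (Fin.pos_iff_ne_zero.mpr (Ne.symm h0t)) htp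
  rw [ht] at this
  exact Fin.not_lt_zero _ this

lemma card_unshuffles_filter_apply_zero [NeZero n] (hp0 : 0 < p) (hp : p ≤ n) :
    #{σ ∈ unshuffles p n | σ 0 = 0} = (n - 1).choose (p - 1) := by
  calc #{σ ∈ unshuffles p n | σ 0 = 0}
      = #{A ∈ powersetCard p (univ : Finset (Fin n)) | {0} ⊆ A} := by
        refine card_nbij (frontImage p) ?_ ?_ ?_
        · intro σ hσ
          obtain ⟨hσ, h0⟩ := mem_filter.mp hσ
          simpa [card_frontImage hp] using (unshuffle_apply_zero_eq_zero_iff hp0 hσ).mp h0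
        · exact (injOn_frontImage hp).mono fun σ hσ => (mem_filter.mp hσ).1
        · intro A hA
          simp only [coe_filter, mem_powersetCard_univ, singleton_subset_iff] at hA
          obtain ⟨σ, hσ, rfl⟩ := exists_unshuffle_frontImage_eq hp hA.1
          have h0 := (unshuffle_apply_zero_eq_zero_iff hp0 hσ).mpr hA.2
          exact ⟨σ, mem_filter.mpr ⟨hσ, h0⟩, rfl⟩
    _ = (n - 1).choose (p - 1) := by
        rw [card_filter_powersetCard_subset _ _ _ (subset_univ _) (by rw [card_singleton]; omega)]
        simp

lemma unshuffle_apply_ne_zero [NeZero n] {σ : Perm (Fin n)} (hσ : σ ∈ unshuffles p n)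
    (h0 : σ 0 ≠ 0) {t : Fin n} (ht : (t : ℕ) < p) : σ t ≠ 0 := fun h =>
  h0 ((unshuffle_apply_zero_eq_zero_iff (by omega) hσ).mpr (h ▸ apply_mem_frontImage_iff.mpr ht))

end Unshuffles

section Lists

variable {α : Type*} (x y : α) (k : ℕ)

lemma get_cons_replicate (s : Fin (x :: List.replicate k y).length) :
    (x :: List.replicate k y).get s = if s = 0 then x else y := by
  rcases s with ⟨_ | i, hi⟩ <;> simp [Fin.ext_iff]

lemma ofFn_get_perm_cons_replicate_of_apply_zero
    {σ : Perm (Fin (x :: List.replicate k y).length)} (h0 : σ 0 = 0) :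
    List.ofFn (fun t => (x :: List.replicate k y).get (σ t)) = x :: List.replicate k y := by
  refine List.ext_get (by simp) fun t h₁ h₂ => ?_
  simp only [List.get_ofFn, get_cons_replicate, σ.injective.eq_iff' h0]
  rfl

lemma take_ofFn_get_perm_cons_replicate {p : ℕ} (hp : p ≤ k + 1)
    {σ : Perm (Fin (x :: List.replicate k y).length)}
    (hσ : σ ∈ unshuffles p (x :: List.replicate k y).length) (h0 : σ 0 ≠ 0) :
    (List.ofFn (fun t => (x :: List.replicate k y).get (σ t))).take p = List.replicate p y := by
  refine List.ext_getElem (by simpa using hp) fun t h₁ h₂ => ?_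
  simp only [List.getElem_take, List.getElem_ofFn, List.getElem_replicate]
  rw [get_cons_replicate]
  exact if_neg (unshuffle_apply_ne_zero hσ h0 (by simpa using h₂))

end Lists

section Operators

variable {K : Type*} [Field K]

lemma sortSign_eq_one_of_pairwise (d : Fin 3 → ℤ) {xs : List (Fin 3)}
    (h : xs.Pairwise (· ≤ ·)) : sortSign K d xs = 1 := by
  rw [sortSign, filter_false_of_mem, prod_empty]
  rintro q - ⟨hlt, hgt⟩
  exact (List.pairwise_iff_get.mp h _ _ hlt).not_gt hgt

lemma sortSign_cons_replicate_two (d : Fin 3 → ℤ) (x : Fin 3) (m : ℕ) :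
    sortSign K d (x :: List.replicate m 2) = 1 :=
  sortSign_eq_one_of_pairwise d <| List.pairwise_cons.mpr
    ⟨fun _ hy => (List.eq_of_mem_replicate hy).symm ▸ Fin.le_last x,
      List.pairwise_replicate.mpr (Or.inr le_rfl)⟩

variable (a b c : ℕ → K) (m : ℕ)

lemma ellm_zero_cons_replicate :
    ellm a b c (0 :: List.replicate m 2) = Pi.single 1 (b (m + 1)) := by
  ext j
  simp [ellm, sortSign_cons_replicate_two, List.count_replicate, Pi.single_apply]

lemma ellm_one_cons_replicate :
    ellm a b c (1 :: List.replicate m 2) = Pi.single 2 (c (m + 1)) := by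
  ext j
  simp [ellm, sortSign_cons_replicate_two, List.count_replicate, Pi.single_apply]

lemma ellm_replicate_two : ellm a b c (List.replicate m 2) = 0 := by
  ext j
  simp [ellm, List.count_replicate]

end Operators

def jacTerm (K : Type*) [Field K] (d : Fin 3 → ℤ) (ell : List (Fin 3) → (Fin 3 → K))
    (xs : List (Fin 3)) (p : ℕ) (σ : Perm (Fin xs.length)) : Fin 3 → K :=
  chi K d xs σ • fun j => ∑ i : Fin 3,
    ell ((List.ofFn fun t => xs.get (σ t)).take p) i *
    ell (i :: (List.ofFn fun t => xs.get (σ t)).drop p) j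

lemma Jac_eq_sum_jacTerm (K : Type*) [Field K] (d : Fin 3 → ℤ)
    (ell : List (Fin 3) → (Fin 3 → K)) (xs : List (Fin 3)) :
    Jac K d ell xs = ∑ p ∈ Icc 1 xs.length, ((-1 : K) ^ (p * (xs.length - p))) •
      ∑ σ ∈ unshuffles p xs.length, jacTerm K d ell xs p σ :=
  rfl

section Jacobiator

variable {K : Type*} [Field K] (a b c : ℕ → K) {k p : ℕ}

lemma odd_degree_zero_cons_replicate_two (s : Fin ((0 : Fin 3) :: List.replicate k 2).length) :
    Odd ((![-1, 0, 1] : Fin 3 → ℤ) (((0 : Fin 3) :: List.replicate k 2).get s)) := by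
  rw [get_cons_replicate]
  split_ifs <;> decide

lemma jacTerm_ellm_zero_cons_replicate (hp : 0 < p) (hpk : p ≤ k + 1)
    {σ : Perm (Fin ((0 : Fin 3) :: List.replicate k 2).length)}
    (hσ : σ ∈ unshuffles p ((0 : Fin 3) :: List.replicate k 2).length) :
    jacTerm K ![-1, 0, 1] (ellm a b c) (0 :: List.replicate k 2) p σ =
      if σ 0 = 0 then Pi.single 2 (b p * c (k + 1 - p + 1)) else 0 := by
  rw [jacTerm, chi_eq_one_of_odd _ _ _ odd_degree_zero_cons_replicate_two, one_smul]
  split_ifs with h0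
  · rw [ofFn_get_perm_cons_replicate_of_apply_zero _ _ _ h0]
    obtain ⟨q, rfl⟩ := Nat.exists_eq_add_of_lt hp
    ext j
    simp [List.take_replicate, List.drop_replicate, min_eq_left (show q ≤ k by omega),
      ellm_zero_cons_replicate, ellm_one_cons_replicate, Pi.single_apply]
  · rw [take_ofFn_get_perm_cons_replicate _ _ _ hpk hσ h0, ellm_replicate_two]
    ext j
    simp

lemma sum_jacTerm_ellm_zero_cons_replicate (hp : 0 < p) (hpk : p ≤ k + 1) :
    ∑ σ ∈ unshuffles p ((0 : Fin 3) :: List.replicate k 2).length,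
        jacTerm K ![-1, 0, 1] (ellm a b c) (0 :: List.replicate k 2) p σ =
      (k.choose (p - 1) : K) • Pi.single 2 (b p * c (k + 1 - p + 1)) := by
  rw [sum_congr rfl fun σ hσ => jacTerm_ellm_zero_cons_replicate a b c hp hpk hσ, sum_ite,
    sum_const_zero, add_zero, sum_const,
    card_unshuffles_filter_apply_zero hp (by simpa), ← Nat.cast_smul_eq_nsmul K]
  simp

end Jacobiator

theorem stmt11_general {K : Type*} [Field K] (a b c : ℕ → K) (n : ℕ) (hn : 1 ≤ n) :
    Jac K ![-1, 0, 1] (ellm a b c) ((0 : Fin 3) :: List.replicate (n - 1) 2) =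
      fun j : Fin 3 => if j = 2 then
        ∑ p ∈ Finset.Icc 1 n, (-1 : K) ^ (p * (n - p)) *
          ((n - 1).choose (p - 1) : K) * b p * c (n - p + 1)
      else 0 := by
  obtain ⟨k, rfl⟩ : ∃ k, n = k + 1 := ⟨n - 1, by omega⟩
  have hlen : ((0 : Fin 3) :: List.replicate k 2).length = k + 1 := by simp
  rw [Nat.add_sub_cancel, Jac_eq_sum_jacTerm, sum_congr rfl fun p hp => by
    rw [sum_jacTerm_ellm_zero_cons_replicate a b c (mem_Icc.mp hp).1 (hlen ▸ (mem_Icc.mp hp).2)]]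
  ext j
  simp only [hlen, Finset.sum_apply, Pi.smul_apply, Pi.single_apply, smul_eq_mul]
  by_cases hj : j = 2 <;> simp [hj, mul_assoc]

/-- Explicit formula for `Jₙ(u ⊗ w^{⊗(n-1)})` on `V₋₁ ⊕ V₀ ⊕ V₁`. -/
theorem stmt11 {K : Type*} [Field K] [CharZero K] (a b c : ℕ → K) (ha : a 1 = 0)
    (n : ℕ) (hn : 1 ≤ n) :
    Jac K ![-1, 0, 1] (ellm a b c) ((0 : Fin 3) :: List.replicate (n - 1) 2) =
      fun j : Fin 3 => if j = 2 then
        ∑ p ∈ Finset.Icc 1 n, (-1 : K) ^ (p * (n - p)) *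
          ((n - 1).choose (p - 1) : K) * b p * c (n - p + 1)
      else 0 :=
  stmt11_general a b c n hn
end

section
/- With V = V₋₁ ⊕ V₀ ⊕ V₁ (one-dimensional components u, v, w) and structure constants aₙ, bₙ, cₙ, Jₙ(u⊗u⊗w^{⊗(n−2)}) = Σ_{p=1}^{n−1} (−1)^{p(n−p)}·(−2)·C(n−2, p−1) b_p a_{n−p+1} · u. -/
open Finset Equiv

/-!
Only the odd vectors `u` and `w` occur, so every Koszul sign `χ(σ)` is `1`. For an unshuffle `σ`
the term of `l_{n-p+1} ∘ l_p` vanishes unless exactly one `u` goes into `l_p`; then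
`l_p(u ⊗ w^{p-1}) = b_p v` and `l_{n-p+1}(v ⊗ u ⊗ w^{n-p-1}) = -a_{n-p+1} u`, the sign being the one
of moving the even `v` past the odd `u`. An unshuffle is determined by the set of positions of its
first block, and `2 · C(n-2, p-1)` of the `p`-subsets contain exactly one of the two positions of
`u`. The summand `p = n` vanishes because `C(n-2, n-1) = 0`.
-/

theorem List.count_ofFn {α : Type*} [DecidableEq α] {N : ℕ} (f : Fin N → α) (x : α) :
    (List.ofFn f).count x = #{i | f i = x} := by
  rw [← Multiset.coe_count, ← Fin.univ_val_map, Multiset.count_map, Finset.card_def,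
    Finset.filter_val]
  congr! 2
  exact eq_comm

theorem Finset.card_filter_powersetCard_card_inter {α : Type*} [Fintype α] [DecidableEq α]
    (s : Finset α) {k p : ℕ} (hkp : k ≤ p) :
    #{S ∈ powersetCard p univ | #(S ∩ s) = k} = (#s).choose k * (#sᶜ).choose (p - k) := by
  rw [← card_powersetCard, ← card_powersetCard, ← card_product]
  refine card_nbij' (fun S => (S ∩ s, S \ s)) (fun T => T.1 ∪ T.2) ?_ ?_ ?_ ?_
  · intro S hS
    simp only [mem_coe, mem_filter, mem_product, mem_powersetCard, subset_univ, true_and] at hS ⊢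
    refine ⟨⟨inter_subset_right, hS.2⟩, fun x hx => by simp_all, ?_⟩
    rw [card_sdiff, inter_comm, hS.1, hS.2]
  · rintro ⟨A, B⟩ hAB
    simp only [mem_coe, mem_filter, mem_product, mem_powersetCard, subset_univ,
      true_and] at hAB ⊢
    obtain ⟨⟨hAs, hA⟩, hBs, hB⟩ := hAB
    have hBs : Disjoint B s := disjoint_of_subset_left hBs disjoint_compl_left
    rw [card_union_of_disjoint (disjoint_of_subset_left hAs hBs.symm), union_inter_distrib_right,
      inter_eq_left.2 hAs, disjoint_iff_inter_eq_empty.1 hBs, union_empty]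
    omega
  · intro S _
    exact sup_inf_sdiff S s
  · rintro ⟨A, B⟩ hAB
    simp only [mem_coe, mem_product, mem_powersetCard] at hAB
    obtain ⟨⟨hAs, -⟩, hBs, -⟩ := hAB
    have hBs : Disjoint B s := disjoint_of_subset_left hBs disjoint_compl_left
    simp only [union_inter_distrib_right, inter_eq_left.2 hAs,
      disjoint_iff_inter_eq_empty.1 hBs, union_empty, union_sdiff_distrib,
      sdiff_eq_empty_iff_subset.2 hAs, empty_union, sdiff_eq_self_of_disjoint hBs]

section Unshuffles
variable {N : ℕ}

/-- `σ t` is the position in the original tensor of the `t`-th factor after unshuffling, so this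
is the set of positions fed into `l_p`. -/
def firstBlock (p : ℕ) (hp : p ≤ N) (σ : Perm (Fin N)) : Finset (Fin N) :=
  univ.map ((Fin.castLEEmb hp).trans σ.toEmbedding)

theorem apply_mem_firstBlock_iff {p : ℕ} (hp : p ≤ N) (σ : Perm (Fin N)) (t : Fin N) :
    σ t ∈ firstBlock p hp σ ↔ (t : ℕ) < p := by
  simp only [firstBlock, mem_map, mem_univ, true_and, Function.Embedding.trans_apply,
    Fin.castLEEmb_apply, Equiv.coe_toEmbedding, EmbeddingLike.apply_eq_iff_eq]
  exact ⟨fun ⟨i, hi⟩ => hi ▸ i.2, fun ht => ⟨⟨t, ht⟩, rfl⟩⟩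

/-- Sorting by the key `t ∉ S` lists `S` first, each block in increasing order: this is the
unshuffle whose first block is `S`. -/
def blockSort (S : Finset (Fin N)) : Perm (Fin N) :=
  Tuple.sort fun t => decide (t ∉ S)

theorem blockSort_apply_mem_iff (S : Finset (Fin N)) (t : Fin N) :
    blockSort S t ∈ S ↔ (t : ℕ) < #S := by
  have key := Tuple.lt_card_le_iff_apply_le_of_monotone (j := t) (a := false)
    (Tuple.monotone_sort fun t => decide (t ∉ S))
  simp only [Function.comp_apply, Bool.le_iff_imp, decide_eq_true_eq, Bool.false_eq_true,
    imp_false, not_not] at key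
  rw [blockSort, ← key, ← card_map (Tuple.sort fun t => decide (t ∉ S)).toEmbedding]
  congr! 2
  ext x
  simp only [mem_map_equiv, mem_filter, mem_univ, true_and, Equiv.apply_symm_apply]

theorem blockSort_mem_unshuffles {p : ℕ} {S : Finset (Fin N)} (hS : #S = p) :
    blockSort S ∈ unshuffles p N := by
  subst hS
  have hsort := (Tuple.eq_sort_iff (f := fun t => decide (t ∉ S))).1 rfl
  have hstable : ∀ i j, i < j → (blockSort S i ∈ S ↔ blockSort S j ∈ S) →
      blockSort S i < blockSort S j := fun i j hij hiff =>
    hsort.2 i j hij (by simpa [blockSort] using hiff)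
  simp only [unshuffles, mem_filter, mem_univ, true_and]
  refine ⟨fun i j hij hj => hstable i j hij ?_, fun i j hi hij => hstable i j hij ?_⟩
  all_goals simp only [blockSort_apply_mem_iff, Fin.lt_def] at hij ⊢; omega

theorem firstBlock_blockSort {p : ℕ} (hp : p ≤ N) {S : Finset (Fin N)} (hS : #S = p) :
    firstBlock p hp (blockSort S) = S := by
  ext x
  obtain ⟨t, rfl⟩ := (blockSort S).surjective x
  rw [apply_mem_firstBlock_iff, blockSort_apply_mem_iff, hS]

theorem blockSort_firstBlock {p : ℕ} (hp : p ≤ N) {σ : Perm (Fin N)} (hσ : σ ∈ unshuffles p N) :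
    blockSort (firstBlock p hp σ) = σ := by
  simp only [unshuffles, mem_filter, mem_univ, true_and] at hσ
  refine ((Tuple.eq_sort_iff).2 ⟨fun i j hij => ?_, fun i j hij heq => ?_⟩).symm
  · simp only [Function.comp_apply, apply_mem_firstBlock_iff, Bool.le_iff_imp,
      decide_eq_true_eq, not_lt]
    exact le_trans' (Fin.le_def.1 hij)
  · simp only [apply_mem_firstBlock_iff, decide_eq_decide, not_iff_not] at heq
    by_cases hj : (j : ℕ) < p
    · exact hσ.1 i j hij hj
    · exact hσ.2 i j (by rw [Fin.lt_def] at hij; omega) hij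

theorem card_filter_unshuffles_firstBlock {p : ℕ} (hp : p ≤ N) (P : Finset (Fin N) → Prop)
    [DecidablePred P] :
    #{σ ∈ unshuffles p N | P (firstBlock p hp σ)} = #{S ∈ powersetCard p univ | P S} := by
  refine card_nbij' (firstBlock p hp) blockSort ?_ ?_ ?_ ?_
  · intro σ hσ
    simp only [mem_coe, mem_filter, mem_powersetCard_univ] at hσ ⊢
    exact ⟨by simp [firstBlock], hσ.2⟩
  · intro S hS
    simp only [mem_coe, mem_filter, mem_powersetCard_univ] at hS ⊢
    rw [firstBlock_blockSort hp hS.1]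
    exact ⟨blockSort_mem_unshuffles hS.1, hS.2⟩
  · intro σ hσ
    exact blockSort_firstBlock hp (mem_filter.1 hσ).1
  · intro S hS
    exact firstBlock_blockSort hp (mem_powersetCard_univ.1 (mem_filter.1 hS).1)

theorem count_take_ofFn_comp_eq_card_firstBlock_inter {α : Type*} [DecidableEq α] {p : ℕ}
    (hp : p ≤ N) (f : Fin N → α) (σ : Perm (Fin N)) (x : α) :
    ((List.ofFn fun t => f (σ t)).take p).count x =
      #(firstBlock p hp σ ∩ ({t | f t = x} : Finset _)) := by
  rw [← Fin.ofFn_take_eq_take_ofFn hp, List.count_ofFn, ← filter_mem_eq_inter, firstBlock,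
    filter_map, card_map]
  congr! 2 with i
  simp [Fin.take_apply]

end Unshuffles

section KoszulSigns
variable {K : Type*} [Field K]

theorem ksign_of_odd {z : ℤ} (hz : Odd z) : ksign K z = -1 := by
  simp [ksign, Int.not_even_iff_odd.2 hz]

theorem Equiv.Perm.sign_eq_signAux_s12 {n : ℕ} (σ : Perm (Fin n)) : sign σ = signAux σ := by
  induction σ using Equiv.Perm.swap_induction_on with
  | one => simp
  | swap_mul f x y hxy ih => rw [sign_mul, signAux_mul, ih, sign_swap hxy, signAux_swap hxy]

theorem Equiv.Perm.signAux_eq_neg_one_pow_card {n : ℕ} (σ : Perm (Fin n)) :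
    signAux σ = (-1) ^ #{p : Fin n × Fin n | p.1 < p.2 ∧ σ p.2 < σ p.1} := by
  rw [signAux, prod_ite, prod_const, prod_const_one, mul_one]
  congr 1
  refine card_nbij' (fun q => (q.2, q.1)) (fun p => ⟨p.2, p.1⟩) ?_ ?_ (fun _ _ => rfl)
    (fun _ _ => rfl)
  · intro q hq
    simp only [coe_filter, mem_finPairsLT, Set.mem_ofPred_eq, mem_univ, true_and] at hq ⊢
    exact ⟨hq.1, hq.2.lt_of_ne fun h => hq.1.ne' (σ.injective h)⟩
  · intro p hp
    simp only [coe_filter, mem_finPairsLT, Set.mem_ofPred_eq, mem_univ, true_and] at hp ⊢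
    exact ⟨hp.1, hp.2.le⟩

theorem chi_eq_one_of_forall_odd (d : Fin 3 → ℤ) (xs : List (Fin 3))
    (hxs : ∀ x ∈ xs, Odd (d x)) (σ : Perm (Fin xs.length)) : chi K d xs σ = 1 := by
  have hodd : ∀ i j, ksign K (d (xs.get i) * d (xs.get j)) = -1 := fun i j =>
    ksign_of_odd ((hxs _ (List.get_mem _ _)).mul (hxs _ (List.get_mem _ _)))
  rw [chi, Perm.sign_eq_signAux_s12, Perm.signAux_eq_neg_one_pow_card]
  simp only [hodd, prod_const, Units.val_pow_eq_pow_val, Units.val_neg, Units.val_one]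
  push_cast
  rw [← pow_add, ← two_mul, pow_mul, neg_one_sq, one_pow]

theorem sortSign_eq_one_of_forall_odd (d : Fin 3 → ℤ) (xs : List (Fin 3))
    (hxs : ∀ x ∈ xs, Odd (d x)) : sortSign K d xs = 1 :=
  prod_eq_one fun _ _ => by
    rw [ksign_of_odd ((hxs _ (List.get_mem _ _)).mul (hxs _ (List.get_mem _ _))), neg_neg]

theorem sortSign_cons (d : Fin 3 → ℤ) (x : Fin 3) (xs : List (Fin 3)) :
    sortSign K d (x :: xs) =
      (∏ j with xs.get j < x, -ksign K (d x * d (xs.get j))) * sortSign K d xs := by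
  simp only [sortSign, prod_filter, Fintype.prod_prod_type, List.length_cons, Fin.prod_univ_succ]
  simp [Fin.succ_lt_succ_iff]

theorem sortSign_cons_of_degree_eq_zero (d : Fin 3 → ℤ) {x : Fin 3} (hx : d x = 0)
    (xs : List (Fin 3)) :
    sortSign K d (x :: xs) = (-1) ^ #{j | xs.get j < x} * sortSign K d xs := by
  simp [sortSign_cons, hx, ksign]

end KoszulSigns

section Operators
variable {K : Type*} [Field K] (a b c : ℕ → K)

theorem odd_degree_of_ne_one {x : Fin 3} (hx : x ≠ 1) : Odd (![-1, 0, 1] x : ℤ) := by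
  fin_cases x <;> simp_all

theorem ellm_of_one_notMem {l : List (Fin 3)} (hl : 1 ∉ l) :
    ellm a b c l = if l.count 0 = 1 then (fun i => if i = 1 then b l.length else 0) else 0 := by
  rw [ellm, sortSign_eq_one_of_forall_odd _ _ fun x hx =>
    odd_degree_of_ne_one (ne_of_mem_of_not_mem hx hl), List.count_eq_zero.2 hl, one_smul]
  split_ifs <;> simp_all

theorem ellm_one_cons {l : List (Fin 3)} (hl : 1 ∉ l) (h0 : l.count 0 = 1) :
    ellm a b c (1 :: l) = fun j => if j = 0 then -a (l.length + 1) else 0 := by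
  have hsign : sortSign K ![-1, 0, 1] (1 :: l) = -1 := by
    rw [sortSign_cons_of_degree_eq_zero _ rfl, sortSign_eq_one_of_forall_odd _ _ fun x hx =>
      odd_degree_of_ne_one (ne_of_mem_of_not_mem hx hl)]
    have hlt : ∀ y : Fin 3, y < 1 ↔ y = 0 := by decide
    simp only [hlt, ← List.count_ofFn, List.ofFn_get, h0, pow_one, mul_one]
  rw [ellm, hsign]
  funext j
  simp [h0, List.count_eq_zero.2 hl]

end Operators

section Jacobiator
variable {K : Type*} [Field K] (a b c : ℕ → K)

theorem sum_ellm_take_mul_ellm_cons_drop {ys : List (Fin 3)} (h1 : 1 ∉ ys)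
    (h0 : ys.count 0 = 2) {p : ℕ} (hp : p ≤ ys.length) (j : Fin 3) :
    ∑ i, ellm a b c (ys.take p) i * ellm a b c (i :: ys.drop p) j =
      if (ys.take p).count 0 = 1 then
        (if j = 0 then -(b p * a (ys.length - p + 1)) else 0)
      else 0 := by
  rw [ellm_of_one_notMem a b c fun h => h1 (List.mem_of_mem_take h)]
  by_cases htake : (ys.take p).count 0 = 1
  · have hdrop : (ys.drop p).count 0 = 1 := by
      have := List.count_append (l₁ := ys.take p) (l₂ := ys.drop p) (a := 0)
      rw [List.take_append_drop] at this
      omega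
    simp only [htake, if_true, Fin.sum_univ_three,
      ellm_one_cons a b c (fun h => h1 (List.mem_of_mem_drop h)) hdrop]
    simp [hp]
  · simp [htake]

theorem sum_unshuffles_chi_smul_ellm {xs : List (Fin 3)} (h1 : 1 ∉ xs) (h0 : xs.count 0 = 2) {p : ℕ}
    (hp1 : 1 ≤ p) (hp : p ≤ xs.length) :
    ∑ σ ∈ unshuffles p xs.length, chi K ![-1, 0, 1] xs σ •
        (fun j : Fin 3 => ∑ i : Fin 3,
          ellm a b c ((List.ofFn (fun t => xs.get (σ t))).take p) i *
          ellm a b c (i :: (List.ofFn (fun t => xs.get (σ t))).drop p) j) =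
      fun j => if j = 0 then
        (-2 : K) * ((xs.length - 2).choose (p - 1) : K) * b p * a (xs.length - p + 1) else 0 := by
  set Z : Finset (Fin xs.length) := {t | xs.get t = 0}
  have hZ : #Z = 2 := by rw [← h0, ← List.count_ofFn, List.ofFn_get]
  have hterm : ∀ σ : Perm (Fin xs.length), ∀ j, ∑ i : Fin 3,
      ellm a b c ((List.ofFn (fun t => xs.get (σ t))).take p) i *
      ellm a b c (i :: (List.ofFn (fun t => xs.get (σ t))).drop p) j =
        if #(firstBlock p hp σ ∩ Z) = 1 then
          (if j = 0 then -(b p * a (xs.length - p + 1)) else 0) else 0 := by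
    intro σ j
    have hperm : (List.ofFn fun t => xs.get (σ t)).Perm xs :=
      (σ.ofFn_comp_perm xs.get).trans (by rw [List.ofFn_get])
    rw [sum_ellm_take_mul_ellm_cons_drop a b c (fun h => h1 (hperm.mem_iff.1 h))
      ((hperm.count_eq 0).trans h0) (by rwa [List.length_ofFn]),
      count_take_ofFn_comp_eq_card_firstBlock_inter hp, List.length_ofFn]
  simp only [chi_eq_one_of_forall_odd _ _ fun x hx =>
    odd_degree_of_ne_one (ne_of_mem_of_not_mem hx h1), one_smul, hterm]
  funext j
  rw [Finset.sum_apply, sum_ite, sum_const_zero, add_zero, sum_const, nsmul_eq_mul,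
    card_filter_unshuffles_firstBlock hp (fun S => #(S ∩ Z) = 1),
    card_filter_powersetCard_card_inter Z hp1, hZ, card_compl, Fintype.card_fin, hZ,
    Nat.choose_one_right]
  split_ifs <;> push_cast <;> ring

theorem jac_ellm_of_count_zero_eq_two {xs : List (Fin 3)} (h1 : 1 ∉ xs) (h0 : xs.count 0 = 2) :
    Jac K ![-1, 0, 1] (ellm a b c) xs = fun j => if j = 0 then
      ∑ p ∈ Icc 1 xs.length, (-1 : K) ^ (p * (xs.length - p)) * (-2 : K) *
        ((xs.length - 2).choose (p - 1) : K) * b p * a (xs.length - p + 1)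
    else 0 := by
  rw [Jac, sum_congr rfl fun p hp => by
    rw [sum_unshuffles_chi_smul_ellm a b c h1 h0 (mem_Icc.1 hp).1 (mem_Icc.1 hp).2]]
  funext j
  rw [Finset.sum_apply]
  split_ifs <;> simp [*, mul_assoc]

end Jacobiator

theorem stmt12_general {K : Type*} [Field K] (a b c : ℕ → K)
    (n : ℕ) (hn : 2 ≤ n) :
    Jac K ![-1, 0, 1] (ellm a b c) ((0 : Fin 3) :: 0 :: List.replicate (n - 2) 2) =
      fun j : Fin 3 => if j = 0 then
        ∑ p ∈ Finset.Icc 1 (n - 1), (-1 : K) ^ (p * (n - p)) * (-2 : K) *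
          ((n - 2).choose (p - 1) : K) * b p * a (n - p + 1)
      else 0 := by
  obtain ⟨m, rfl⟩ : ∃ m, n = m + 2 := ⟨n - 2, by omega⟩
  have hlen : ((0 : Fin 3) :: 0 :: List.replicate (m + 2 - 2) 2).length = m + 2 := by simp
  rw [jac_ellm_of_count_zero_eq_two a b c (by simp) (by simp [List.count_replicate]), hlen,
    Nat.add_sub_cancel, show m + 2 - 1 = m + 1 from rfl,
    sum_Icc_succ_top (by omega : 1 ≤ m + 2), Nat.choose_eq_zero_of_lt (by omega)]
  simp

/-- Explicit formula for `Jₙ(u ⊗ u ⊗ w^{⊗(n-2)})` on `V₋₁ ⊕ V₀ ⊕ V₁`. -/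
theorem stmt12 {K : Type*} [Field K] [CharZero K] (a b c : ℕ → K) (ha : a 1 = 0)
    (n : ℕ) (hn : 2 ≤ n) :
    Jac K ![-1, 0, 1] (ellm a b c) ((0 : Fin 3) :: 0 :: List.replicate (n - 2) 2) =
      fun j : Fin 3 => if j = 0 then
        ∑ p ∈ Finset.Icc 1 (n - 1), (-1 : K) ^ (p * (n - p)) * (-2 : K) *
          ((n - 2).choose (p - 1) : K) * b p * a (n - p + 1)
      else 0 :=
  stmt12_general a b c n hn
end

section
/- Let (aₙ), (bₙ), (cₙ) be sequences in a field of characteristic zero with a₁ = 0. Suppose 1 ≤ k ≤ m, b_k ≠ 0, and b_p = 0 for all p < k. Then the following three families of identities hold for all n ≤ m: (I) Σ_{p=1}^n (−1)^{p(n−p)} C(n−1, p−1) b_p c_{n−p+1} = 0, (II) Σ_{p=1}^{n−1} (−1)^{p(n−p)} C(n−2, p−1) b_p a_{n−p+1} = 0, (III) Σ_{p=1}^n (−1)^{p(n−p)} b_{n−p+1} [ C(n−2, p−2)·a_p − C(n−2, p−1)·c_p ] = 0, if and only if a_q = c_q = 0 for all q ≤ m−k+1. -/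
open Finset Equiv

/-- Reduction of `Jₙ = 0` on `u ⊗ w^{⊗(n-1)}` for `V₋₁ ⊕ V₀ ⊕ V₁`. -/
def S1 {K : Type*} [Field K] (b c : ℕ → K) (n : ℕ) : K :=
  ∑ p ∈ Finset.Icc 1 n, (-1 : K) ^ (p * (n - p)) * ((n - 1).choose (p - 1) : K) *
    b p * c (n - p + 1)

/-- Reduction of `Jₙ = 0` on `u ⊗ u ⊗ w^{⊗(n-2)}` for `V₋₁ ⊕ V₀ ⊕ V₁`. -/
def S2 {K : Type*} [Field K] (a b : ℕ → K) (n : ℕ) : K :=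
  ∑ p ∈ Finset.Icc 1 (n - 1), (-1 : K) ^ (p * (n - p)) * ((n - 2).choose (p - 1) : K) *
    b p * a (n - p + 1)

/-- Reduction of `Jₙ = 0` on `u ⊗ v ⊗ w^{⊗(n-2)}` for `V₋₁ ⊕ V₀ ⊕ V₁`. -/
def S3 {K : Type*} [Field K] (a b c : ℕ → K) (n : ℕ) : K :=
  ∑ p ∈ Finset.Icc 1 n, (-1 : K) ^ (p * (n - p)) * b (n - p + 1) *
    (((n - 2).choose (p - 2) : K) * a p - ((n - 2).choose (p - 1) : K) * c p)

/-!
Since `b` vanishes below `k`, each of `S1`, `S2`, `S3` is a sum of terms `b_p · x_{n-p+1}` with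
`p ≥ k`, so all of them vanish once `a` and `c` vanish up to `n - k + 1`. Conversely, by strong
induction on `q`, if `a` and `c` vanish below `q`, then in `S1` and `S2` at `n = q + k - 1` only
the term `p = k` survives; its coefficient is a sign times a positive binomial times `b_k ≠ 0`,
which forces `c_q = 0` and (for `q ≥ 2`; `a_1 = 0` is given) `a_q = 0`.
-/

section

variable {K : Type*} [Field K] {a b c : ℕ → K} {k n q : ℕ}

theorem sum_Icc_mul_eq_leading (w b x : ℕ → K) {N : ℕ} (hk : k ∈ Icc 1 N)
    (hb : ∀ p < k, b p = 0) (hx : ∀ p ∈ Icc 1 N, k < p → x (n - p + 1) = 0) :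
    ∑ p ∈ Icc 1 N, w p * b p * x (n - p + 1) = w k * b k * x (n - k + 1) := by
  refine sum_eq_single_of_mem k hk fun p hp hpk => ?_
  rcases lt_or_gt_of_ne hpk with hlt | hgt
  · rw [hb p hlt, mul_zero, zero_mul]
  · rw [hx p hp hgt, mul_zero]

theorem neg_one_pow_mul_choose_mul_ne_zero [CharZero K] (e : ℕ) {N j : ℕ} (hj : j ≤ N) {x : K}
    (hx : x ≠ 0) : (-1 : K) ^ e * (N.choose j : K) * x ≠ 0 :=
  mul_ne_zero (mul_ne_zero (pow_ne_zero _ (neg_ne_zero.mpr one_ne_zero))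
    (Nat.cast_ne_zero.mpr (Nat.choose_pos hj).ne')) hx

theorem jacobi_of_forall_eq_zero (hb : ∀ p < k, b p = 0)
    (hac : ∀ q, 1 ≤ q → q ≤ n - k + 1 → a q = 0 ∧ c q = 0) :
    S1 b c n = 0 ∧ S2 a b n = 0 ∧ S3 a b c n = 0 := by
  refine ⟨sum_eq_zero fun p hp => ?_, sum_eq_zero fun p hp => ?_, sum_eq_zero fun p hp => ?_⟩ <;>
    rw [mem_Icc] at hp
  · by_cases hpk : p < k
    · rw [hb p hpk, mul_zero, zero_mul]
    · rw [(hac (n - p + 1) (by omega) (by omega)).2, mul_zero]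
  · by_cases hpk : p < k
    · rw [hb p hpk, mul_zero, zero_mul]
    · rw [(hac (n - p + 1) (by omega) (by omega)).1, mul_zero]
  · by_cases hpk : n - p + 1 < k
    · rw [hb _ hpk, mul_zero, zero_mul]
    · obtain ⟨hap, hcp⟩ := hac p (by omega) (by omega)
      rw [hap, hcp, mul_zero, mul_zero, sub_zero, mul_zero]

variable [CharZero K] (hb : ∀ p < k, b p = 0) (hbk : b k ≠ 0) (hk : 1 ≤ k)
include hb hbk hk

theorem eq_zero_of_S1_eq_zero (hq : 1 ≤ q) (hc : ∀ r, 1 ≤ r → r < q → c r = 0)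
    (hS : S1 b c (q + k - 1) = 0) : c q = 0 := by
  rw [S1, sum_Icc_mul_eq_leading _ b c (mem_Icc.mpr ⟨hk, by omega⟩) hb
    fun p hp hkp => hc _ (by omega) (by rw [mem_Icc] at hp; omega)] at hS
  have hqk : q + k - 1 - k + 1 = q := by omega
  rw [hqk] at hS
  exact (mul_eq_zero.mp hS).resolve_left
    (neg_one_pow_mul_choose_mul_ne_zero _ (by omega) hbk)

theorem eq_zero_of_S2_eq_zero (hq : 2 ≤ q) (ha : ∀ r, 1 ≤ r → r < q → a r = 0)
    (hS : S2 a b (q + k - 1) = 0) : a q = 0 := by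
  rw [S2, sum_Icc_mul_eq_leading _ b a (mem_Icc.mpr ⟨hk, by omega⟩) hb
    fun p hp hkp => ha _ (by omega) (by rw [mem_Icc] at hp; omega)] at hS
  have hqk : q + k - 1 - k + 1 = q := by omega
  rw [hqk] at hS
  exact (mul_eq_zero.mp hS).resolve_left
    (neg_one_pow_mul_choose_mul_ne_zero _ (by omega) hbk)

end

/-- If `b_p = 0` for `p < k` and `b_k ≠ 0` with `1 ≤ k ≤ m`, then the first
`m` Jacobi identities for `V₋₁ ⊕ V₀ ⊕ V₁` hold iff `a_q = c_q = 0` for all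
`q ≤ m - k + 1`. -/
theorem stmt14 {K : Type*} [Field K] [CharZero K] (a b c : ℕ → K) (ha : a 1 = 0)
    (k m : ℕ) (hk1 : 1 ≤ k) (hkm : k ≤ m)
    (hbk : b k ≠ 0) (hb0 : ∀ p : ℕ, p < k → b p = 0) :
    (∀ n : ℕ, 1 ≤ n → n ≤ m → S1 b c n = 0 ∧ S2 a b n = 0 ∧ S3 a b c n = 0) ↔
      (∀ q : ℕ, 1 ≤ q → q ≤ m - k + 1 → a q = 0 ∧ c q = 0) := by
  refine ⟨fun H q => ?_, fun h n _ hnm => jacobi_of_forall_eq_zero hb0 fun q hq1 hq =>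
    h q hq1 (by omega)⟩
  induction q using Nat.strong_induction_on with
  | _ q ih =>
    intro hq1 hqm
    have below (r : ℕ) (hr1 : 1 ≤ r) (hrq : r < q) := ih r hrq hr1 (by omega)
    obtain ⟨hS1, hS2, -⟩ := H (q + k - 1) (by omega) (by omega)
    refine ⟨?_, eq_zero_of_S1_eq_zero hb0 hbk hk1 hq1 (fun r h1 h2 => (below r h1 h2).2) hS1⟩
    obtain rfl | hq2 := eq_or_lt_of_le hq1
    · exact ha
    · exact eq_zero_of_S2_eq_zero hb0 hbk hk1 hq2 (fun r h1 h2 => (below r h1 h2).1) hS2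
end

section
/- Let (aₙ), (bₙ), (cₙ) be sequences in a field of characteristic zero with a₁ = 0 that satisfy, for every n ∈ ℕ, the three Jacobi constraints of V₋₁ ⊕ V₀ ⊕ V₁ (i.e., V carries an L∞ structure). If bₘ ≠ 0 for some m ∈ ℕ, then aₙ = 0 and cₙ = 0 for all n ∈ ℕ. -/
open Finset Equiv

/-!
Let `M` be the first index with `b M ≠ 0`. In the constraint `S1 b c (M + n - 1) = 0` every
term with `p < M` dies because `b p = 0`, and every term with `p > M` involves some `c k` with
`k < n`, so by strong induction only the term `p = M` survives: it is a nonzero multiple of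
`b M * c n`, whence `c n = 0`. The constraint `S2` treats `a n` for `n ≥ 2` in the same way,
and `a 1 = 0` is given.
-/

theorem exists_first_ne_zero {M₀ : Type*} [Zero M₀] {b : ℕ → M₀} {m : ℕ} (hm : 1 ≤ m)
    (hbm : b m ≠ 0) : ∃ M, 1 ≤ M ∧ b M ≠ 0 ∧ ∀ p, 1 ≤ p → p < M → b p = 0 := by
  classical
  have hex : ∃ p, 1 ≤ p ∧ b p ≠ 0 := ⟨m, hm, hbm⟩
  obtain ⟨hM, hbM⟩ := Nat.find_spec hex
  exact ⟨Nat.find hex, hM, hbM, fun p hp hlt => not_not.mp fun h => Nat.find_min hex hlt ⟨hp, h⟩⟩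

theorem sum_eq_leading_term {R : Type*} [Semiring R] {s : Finset ℕ} {f b x : ℕ → R} {M N : ℕ}
    (hMs : M ∈ s) (hs : ∀ p ∈ s, 1 ≤ p ∧ p ≤ N) (hb : ∀ p, 1 ≤ p → p < M → b p = 0)
    (hx : ∀ k, 1 ≤ k → k < N - M + 1 → x k = 0) :
    ∑ p ∈ s, f p * b p * x (N - p + 1) = f M * b M * x (N - M + 1) := by
  refine sum_eq_single_of_mem M hMs fun p hp hpM => ?_
  obtain ⟨hp1, hpN⟩ := hs p hp
  rcases hpM.lt_or_gt with hlt | hgt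
  · rw [hb p hp1 hlt, mul_zero, zero_mul]
  · rw [hx (N - p + 1) (by omega) (by omega), mul_zero]

theorem eq_zero_of_sign_mul_choose_mul_eq_zero {R : Type*} [Ring R] [NoZeroDivisors R]
    [CharZero R] {e N i : ℕ} {β x : R} (hβ : β ≠ 0) (hi : i ≤ N)
    (h : (-1) ^ e * (N.choose i : R) * β * x = 0) : x = 0 := by
  have hchoose : (N.choose i : R) ≠ 0 := Nat.cast_ne_zero.mpr (Nat.choose_pos hi).ne'
  simpa [hchoose, hβ] using h

section LeadingTerm

variable {K : Type*} [Field K] {b : ℕ → K} {M n : ℕ}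

theorem S1_eq_leading_term {c : ℕ → K} (hM : 1 ≤ M) (hn : 1 ≤ n)
    (hb : ∀ p, 1 ≤ p → p < M → b p = 0) (hc : ∀ k, 1 ≤ k → k < n → c k = 0) :
    S1 b c (M + n - 1) = (-1) ^ (M * (n - 1)) * ((M + n - 2).choose (M - 1) : K) * b M * c n := by
  have hNM : M + n - 1 - M = n - 1 := by omega
  have hN : M + n - 1 - 1 = M + n - 2 := by omega
  rw [S1, sum_eq_leading_term (mem_Icc.mpr ⟨hM, by omega⟩) (fun p hp => mem_Icc.mp hp) hb
    (fun k hk hkn => hc k hk (by omega)), hNM, hN, Nat.sub_add_cancel hn]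

theorem S2_eq_leading_term {a : ℕ → K} (hM : 1 ≤ M) (hn : 2 ≤ n)
    (hb : ∀ p, 1 ≤ p → p < M → b p = 0) (ha : ∀ k, 1 ≤ k → k < n → a k = 0) :
    S2 a b (M + n - 1) = (-1) ^ (M * (n - 1)) * ((M + n - 3).choose (M - 1) : K) * b M * a n := by
  have hNM : M + n - 1 - M = n - 1 := by omega
  have hN : M + n - 1 - 2 = M + n - 3 := by omega
  rw [S2, sum_eq_leading_term (mem_Icc.mpr ⟨hM, by omega⟩)
    (fun p hp => (mem_Icc.mp hp).imp_right (·.trans (Nat.sub_le _ _))) hb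
    (fun k hk hkn => ha k hk (by omega)), hNM, hN, Nat.sub_add_cancel (by omega : 1 ≤ n)]

end LeadingTerm

/-- In an L∞ structure on `V₋₁ ⊕ V₀ ⊕ V₁`, if some `bₘ ≠ 0` then all `aₙ` and
`cₙ` vanish. -/
theorem stmt16 {K : Type*} [Field K] [CharZero K] (a b c : ℕ → K) (ha : a 1 = 0)
    (hJ : ∀ n : ℕ, 1 ≤ n → S1 b c n = 0 ∧ S2 a b n = 0 ∧ S3 a b c n = 0)
    (m : ℕ) (hm : 1 ≤ m) (hbm : b m ≠ 0) :
    ∀ n : ℕ, 1 ≤ n → a n = 0 ∧ c n = 0 := by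
  obtain ⟨M, hM, hbM, hb⟩ := exists_first_ne_zero hm hbm
  have hc_zero : ∀ n, 1 ≤ n → c n = 0 := by
    intro n
    induction n using Nat.strong_induction_on with
    | _ n ih =>
      intro hn
      have h := (hJ (M + n - 1) (by omega)).1
      rw [S1_eq_leading_term hM hn hb fun k hk hkn => ih k hkn hk] at h
      exact eq_zero_of_sign_mul_choose_mul_eq_zero hbM (by omega) h
  have ha_zero : ∀ n, 1 ≤ n → a n = 0 := by
    intro n
    induction n using Nat.strong_induction_on with
    | _ n ih =>
      intro hn
      rcases hn.eq_or_lt with rfl | hn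
      · exact ha
      have h := (hJ (M + n - 1) (by omega)).2.1
      rw [S2_eq_leading_term hM hn hb fun k hk hkn => ih k hkn hk] at h
      exact eq_zero_of_sign_mul_choose_mul_eq_zero hbM (by omega) h
  exact fun n hn => ⟨ha_zero n hn, hc_zero n hn⟩
end

section
/- Every L∞ structure on V = V₋₁ ⊕ V₀ ⊕ V₁ (one-dimensional components, structure constants aₙ, bₙ, cₙ with a₁ = 0) has one of the following two forms: either bₙ = 0 for all n (with aₙ, cₙ arbitrary), or bₘ ≠ 0 for some m and then aₙ = cₙ = 0 for all n. Conversely, both forms define L∞ structures. -/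
/-!
If some `bₙ` is nonzero, let `m` be the least such index. At `n = m + k - 1` the first
(resp. second) condition is triangular: the terms with `p < m` vanish because `b_p = 0`,
and those with `p > m` involve `c_j` (resp. `a_j`) with `j < k` only. What remains is
`± C(n - 1, m - 1) b_m c_k` (resp. `± C(n - 2, m - 1) b_m a_k`), whose coefficient is
nonzero in characteristic zero, so strong induction on `k` kills all `c_k` and `a_k`.
The second condition never involves `a₁`, so the induction for `a` starts from `a₁ = 0`.
Conversely, every term of every condition contains a factor `b_p`, `a_p` or `c_p`.
-/

open Finset Equiv

section Triangular

variable {K : Type*} [Field K]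

theorem sum_Icc_eq_leading_term {b f w : ℕ → K} {m k n N : ℕ}
    (hb : ∀ p, 1 ≤ p → p < m → b p = 0) (hf : ∀ j, 1 ≤ j → j < k → f j = 0)
    (hm : 1 ≤ m) (hmN : m ≤ N) (hNn : N ≤ n) (hn : n + 1 = m + k) :
    ∑ p ∈ Icc 1 N, w p * b p * f (n - p + 1) = w m * b m * f k := by
  rw [sum_eq_single_of_mem m (mem_Icc.2 ⟨hm, hmN⟩), show n - m + 1 = k by omega]
  intro p hp hpm
  rw [mem_Icc] at hp
  rcases lt_or_gt_of_ne hpm with hlt | hgt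
  · rw [hb p hp.1 hlt, mul_zero, zero_mul]
  · rw [hf (n - p + 1) (by omega) (by omega), mul_zero]

variable [CharZero K] {a b c : ℕ → K} {m : ℕ}

theorem eq_zero_of_S1_eq_zero_s17 (hm : 1 ≤ m) (hb : ∀ p, 1 ≤ p → p < m → b p = 0)
    (hbm : b m ≠ 0) (hS1 : ∀ n, 1 ≤ n → S1 b c n = 0) : ∀ k, 1 ≤ k → c k = 0 := by
  intro k
  induction k using Nat.strong_induction_on with
  | _ k ih =>
    intro hk
    have h := hS1 (m + k - 1) (by omega)
    rw [S1, sum_Icc_eq_leading_term hb (fun j hj hjk => ih j hjk hj) hm (by omega) le_rfl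
      (by omega)] at h
    have hchoose : ((m + k - 1 - 1).choose (m - 1) : K) ≠ 0 :=
      Nat.cast_ne_zero.2 (Nat.choose_pos (by omega)).ne'
    simpa [hbm, hchoose] using h

theorem eq_zero_of_S2_eq_zero_s17 (hm : 1 ≤ m) (hb : ∀ p, 1 ≤ p → p < m → b p = 0)
    (hbm : b m ≠ 0) (ha : a 1 = 0) (hS2 : ∀ n, 1 ≤ n → S2 a b n = 0) :
    ∀ k, 1 ≤ k → a k = 0 := by
  intro k
  induction k using Nat.strong_induction_on with
  | _ k ih =>
    intro hk
    obtain rfl | hk := eq_or_lt_of_le hk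
    · exact ha
    have h := hS2 (m + k - 1) (by omega)
    rw [S2, sum_Icc_eq_leading_term hb (fun j hj hjk => ih j hjk hj) hm (by omega) (by omega)
      (by omega)] at h
    have hchoose : ((m + k - 1 - 2).choose (m - 1) : K) ≠ 0 :=
      Nat.cast_ne_zero.2 (Nat.choose_pos (by omega)).ne'
    simpa [hbm, hchoose] using h

end Triangular

section Converse

variable {K : Type*} [Field K] {a b c : ℕ → K}

theorem S_eq_zero_of_b_eq_zero (hb : ∀ n, 1 ≤ n → b n = 0) (n : ℕ) :
    S1 b c n = 0 ∧ S2 a b n = 0 ∧ S3 a b c n = 0 := by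
  refine ⟨sum_eq_zero fun p hp => ?_, sum_eq_zero fun p hp => ?_,
    sum_eq_zero fun p hp => ?_⟩ <;> rw [mem_Icc] at hp
  · rw [hb p hp.1, mul_zero, zero_mul]
  · rw [hb p hp.1, mul_zero, zero_mul]
  · rw [hb (n - p + 1) (by omega), mul_zero, zero_mul]

theorem S_eq_zero_of_a_c_eq_zero (hac : ∀ n, 1 ≤ n → a n = 0 ∧ c n = 0) (n : ℕ) :
    S1 b c n = 0 ∧ S2 a b n = 0 ∧ S3 a b c n = 0 := by
  refine ⟨sum_eq_zero fun p hp => ?_, sum_eq_zero fun p hp => ?_,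
    sum_eq_zero fun p hp => ?_⟩ <;> rw [mem_Icc] at hp
  · rw [(hac (n - p + 1) (by omega)).2, mul_zero]
  · rw [(hac (n - p + 1) (by omega)).1, mul_zero]
  · rw [(hac p hp.1).1, (hac p hp.1).2, mul_zero, mul_zero, sub_zero, mul_zero]

end Converse

/-- Every L∞ structure on `V₋₁ ⊕ V₀ ⊕ V₁` has one of two forms: all `bₙ = 0`
(with `aₙ, cₙ` arbitrary), or some `bₘ ≠ 0` and then all `aₙ = cₙ = 0`; and
conversely both forms define L∞ structures. -/
theorem stmt17 {K : Type*} [Field K] [CharZero K] (a b c : ℕ → K) (ha : a 1 = 0) :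
    (∀ n : ℕ, 1 ≤ n → S1 b c n = 0 ∧ S2 a b n = 0 ∧ S3 a b c n = 0) ↔
      ((∀ n : ℕ, 1 ≤ n → b n = 0) ∨
        ((∃ m : ℕ, 1 ≤ m ∧ b m ≠ 0) ∧ ∀ n : ℕ, 1 ≤ n → a n = 0 ∧ c n = 0)) := by
  classical
  constructor
  · intro h
    by_cases hb : ∀ n, 1 ≤ n → b n = 0
    · exact Or.inl hb
    push Not at hb
    obtain ⟨hm, hbm⟩ := Nat.find_spec hb
    have hmin : ∀ p, 1 ≤ p → p < Nat.find hb → b p = 0 := fun p hp hlt =>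
      not_not.1 fun hbp => Nat.find_min hb hlt ⟨hp, hbp⟩
    have hc_zero := eq_zero_of_S1_eq_zero_s17 hm hmin hbm fun n hn => (h n hn).1
    have ha_zero := eq_zero_of_S2_eq_zero_s17 hm hmin hbm ha fun n hn => (h n hn).2.1
    exact Or.inr ⟨⟨_, hm, hbm⟩, fun n hn => ⟨ha_zero n hn, hc_zero n hn⟩⟩
  · rintro (hb | ⟨-, hac⟩) n -
    · exact S_eq_zero_of_b_eq_zero hb n
    · exact S_eq_zero_of_a_c_eq_zero hac n
end

section
/- Let V = V₋₁ ⊕ V₀ ⊕ V₁ with one-dimensional components and structure constants (aₙ), (bₙ), (cₙ) (a₁ = 0) satisfying the L₃ conditions (J₁ = J₂ = J₃ = 0). Then b₂a₂ = 0 and b₂c₂ = 0; hence every L₃ structure on V₋₁ ⊕ V₀ ⊕ V₁ is a differential graded Lie algebra. -/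
open Finset Equiv

/-!
The conditions `S2` and `S3` in arities `2` and `3` already place `(b₂a₂)²` and `(b₂c₂)²`
in the ideal they generate, so both products vanish in a field:
`b₁a₂ = 0` and `b₁a₃ + b₂a₂ = 0` give `(b₂a₂)² = 0`, while the arity-3 conditions give
`b₂c₂ ≡ b₃(a₁ - c₁)` and the arity-2 ones `b₂(a₁ - c₁) ≡ b₁a₂ ≡ 0`, hence `b₂²c₂ ≡ 0`.
-/

section SmallArity

variable {K : Type*} [Field K] (a b c : ℕ → K)

theorem S2_two : S2 a b 2 = -(b 1 * a 2) := by
  simp [S2]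

theorem S2_three : S2 a b 3 = b 1 * a 3 + b 2 * a 2 := by
  simp [S2, Finset.sum_Icc_succ_top]

theorem S3_two : S3 a b c 2 = b 1 * a 2 - b 2 * (a 1 - c 1) := by
  simp [S3, Finset.sum_Icc_succ_top]
  ring

theorem S3_three :
    S3 a b c 3 = b 3 * (a 1 - c 1) + b 2 * (a 2 - c 2) + b 1 * a 3 := by
  simp [S3, Finset.sum_Icc_succ_top]

end SmallArity

theorem stmt18_general {K : Type*} [Field K] (a b c : ℕ → K)
    (hJ : ∀ n : ℕ, 1 ≤ n → n ≤ 3 → S1 b c n = 0 ∧ S2 a b n = 0 ∧ S3 a b c n = 0) :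
    b 2 * a 2 = 0 ∧ b 2 * c 2 = 0 := by
  obtain ⟨-, h22, h32⟩ := hJ 2 (by norm_num) (by norm_num)
  obtain ⟨-, h23, h33⟩ := hJ 3 (by norm_num) (by norm_num)
  rw [S2_two] at h22
  rw [S2_three] at h23
  rw [S3_two] at h32
  rw [S3_three] at h33
  constructor
  · exact pow_eq_zero_iff two_ne_zero |>.mp <| by
      linear_combination (b 2 * a 2) * h23 + b 2 * a 3 * h22
  · exact pow_eq_zero_iff two_ne_zero |>.mp <| by
      linear_combination b 2 * c 2 * h23 - b 2 * c 2 * h33 - b 3 * c 2 * h22 - b 3 * c 2 * h32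

/-- Every `L₃` structure on `V₋₁ ⊕ V₀ ⊕ V₁` is a d.g. Lie algebra:
`b₂a₂ = 0` and `b₂c₂ = 0`. -/
theorem stmt18 {K : Type*} [Field K] [CharZero K] (a b c : ℕ → K) (ha : a 1 = 0)
    (hJ : ∀ n : ℕ, 1 ≤ n → n ≤ 3 → S1 b c n = 0 ∧ S2 a b n = 0 ∧ S3 a b c n = 0) :
    b 2 * a 2 = 0 ∧ b 2 * c 2 = 0 :=
  stmt18_general a b c hJ
end
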